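/- arXiv:1605.06734 — 10 statements merged into one kernel-verified Lean document; each statement's English description precedes it below -/
import Mathlib

section
/- The function y(x) = E_α(βx) is the unique analytic solution of the pantograph initial value problem y'(x) = β y(αx), y(0) = 1. -/
/-- The exponent-like function `E_α`. -/
noncomputable def Ea (α : ℝ) (x : ℝ) : ℝ :=
  ∑' n : ℕ, α ^ (n * (n - 1) / 2) * x ^ n / (n.factorial : ℝ)

noncomputable def pantC (α β : ℝ) (n : ℕ) : ℝ :=
  α ^ (n * (n - 1) / 2) * β ^ n / (n.factorial : ℝ)

lemma pant_tri (n : ℕ) : (n + 1) * ((n + 1) - 1) / 2 = n + n * (n - 1) / 2 := by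
  cases n with
  | zero => rfl
  | succ m =>
      have h : (m + 1 + 1) * ((m + 1 + 1) - 1) = 2 * (m + 1) + (m + 1) * ((m + 1) - 1) := by
        simp only [Nat.add_sub_cancel]; ring
      rw [h, Nat.mul_add_div (by norm_num)]

lemma pant_rec (α β : ℝ) (n : ℕ) :
    ((n : ℝ) + 1) * pantC α β (n + 1) = β * α ^ n * pantC α β n := by
  unfold pantC
  rw [pant_tri, pow_add, Nat.factorial_succ, Nat.cast_mul, pow_succ]
  have h1 : ((n.factorial : ℝ)) ≠ 0 := Nat.cast_ne_zero.mpr n.factorial_ne_zero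
  have h2 : ((n : ℝ) + 1) ≠ 0 := by positivity
  field_simp
  push_cast; ring

lemma pant_abs_le (α β : ℝ) (hα : 0 ≤ α) (hα1 : α ≤ 1) (n : ℕ) :
    |pantC α β n| ≤ |β| ^ n / n.factorial := by
  unfold pantC
  rw [abs_div, abs_mul, abs_pow, abs_pow, Nat.abs_cast, abs_of_nonneg hα]
  calc α ^ (n * (n - 1) / 2) * |β| ^ n / n.factorial
      ≤ 1 * |β| ^ n / n.factorial := by
        gcongr
        exact pow_le_one₀ hα hα1
    _ = |β| ^ n / n.factorial := by rw [one_mul]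

lemma pant_summable_master (α β : ℝ) (hα : 0 ≤ α) (hα1 : α ≤ 1) (r : ℝ) (hr : 0 ≤ r) :
    Summable (fun n : ℕ => ((n : ℝ) + 1) * |pantC α β n| * r ^ n) := by
  refine Summable.of_nonneg_of_le (fun n => by positivity) (fun n => ?_)
    (Real.summable_pow_div_factorial (2 * (|β| * r)))
  have h1 : ((n : ℝ) + 1) * |pantC α β n| * r ^ n ≤ ((n : ℝ) + 1) * (|β| ^ n / n.factorial) * r ^ n := by
    have := pant_abs_le α β hα hα1 n
    gcongr
  refine h1.trans ?_
  have h2 : ((n : ℝ) + 1) ≤ 2 ^ n := by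
    exact_mod_cast Nat.succ_le_of_lt (Nat.lt_two_pow_self (n := n))
  calc ((n : ℝ) + 1) * (|β| ^ n / n.factorial) * r ^ n
      ≤ 2 ^ n * (|β| ^ n / n.factorial) * r ^ n := by gcongr
    _ = (2 * (|β| * r)) ^ n / n.factorial := by rw [mul_pow, mul_pow]; ring

section main
variable {α β : ℝ} (hα : 0 < α) (hα1 : α < 1)

lemma pant_summable_pt (hα : 0 < α) (hα1 : α < 1) (x : ℝ) :
    Summable (fun n : ℕ => pantC α β n * x ^ n) := by
  refine Summable.of_norm_bounded (pant_summable_master α β hα.le hα1.le |x| (abs_nonneg x)) ?_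
  intro n
  rw [Real.norm_eq_abs, abs_mul, abs_pow]
  have h : (1 : ℝ) ≤ (n : ℝ) + 1 := by have := Nat.cast_nonneg (α := ℝ) n; linarith
  nlinarith [abs_nonneg (pantC α β n), pow_nonneg (abs_nonneg x) n,
    mul_nonneg (abs_nonneg (pantC α β n)) (pow_nonneg (abs_nonneg x) n)]

lemma Ea_eq_tsum (hα : 0 < α) (hα1 : α < 1) (x : ℝ) :
    Ea α (β * x) = ∑' n : ℕ, pantC α β n * x ^ n := by
  unfold Ea pantC
  refine tsum_congr fun n => ?_
  rw [mul_pow]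
  ring

lemma pant_deriv_bound (hα : 0 < α) (hα1 : α < 1) (x : ℝ) {R : ℝ} (hR : 1 ≤ R)
    (n : ℕ) (hx : |x| < R) :
    ‖pantC α β n * ((n : ℝ) * x ^ (n - 1))‖ ≤ ((n : ℝ) + 1) * |pantC α β n| * R ^ n := by
  rw [Real.norm_eq_abs, abs_mul, abs_mul, abs_pow, Nat.abs_cast]
  have hR0 : (0:ℝ) ≤ R := le_trans zero_le_one hR
  have h1 : |x| ^ (n - 1) ≤ R ^ (n - 1) := pow_le_pow_left₀ (abs_nonneg x) hx.le _
  have h2 : R ^ (n - 1) ≤ R ^ n := pow_le_pow_right₀ hR (Nat.sub_le n 1)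
  calc |pantC α β n| * ((n : ℝ) * |x| ^ (n - 1))
      ≤ |pantC α β n| * (((n : ℝ) + 1) * R ^ n) := by
        have : (n : ℝ) * |x| ^ (n-1) ≤ ((n:ℝ)+1) * R ^ n := by
          have : (n : ℝ) * |x| ^ (n-1) ≤ (n:ℝ) * R ^ n := by
            have := h1.trans h2
            gcongr
          refine this.trans ?_
          have : (0:ℝ) ≤ R ^ n := by positivity
          nlinarith
        gcongr
    _ = ((n : ℝ) + 1) * |pantC α β n| * R ^ n := by ring

/-- Term-wise differentiation: the sum satisfies the pantograph equation. -/
lemma pant_hasDerivAt (hα : 0 < α) (hα1 : α < 1) (x : ℝ) :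
    HasDerivAt (fun t => ∑' n : ℕ, pantC α β n * t ^ n)
      (β * ∑' n : ℕ, pantC α β n * (α * x) ^ n) x := by
  set R : ℝ := |x| + 1 with hRdef
  have hR1 : (1:ℝ) ≤ R := by rw [hRdef]; have := abs_nonneg x; linarith
  have hu := pant_summable_master α β hα.le hα1.le R (by linarith)
  have hder : HasDerivAt (fun t => ∑' n : ℕ, pantC α β n * t ^ n)
      (∑' n : ℕ, pantC α β n * ((n : ℝ) * x ^ (n - 1))) x := by
    refine hasDerivAt_tsum_of_isPreconnected hu (Metric.isOpen_ball)
      ((convex_ball (0:ℝ) R).isPreconnected) (g := fun n t => pantC α β n * t ^ n)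
      (fun n y _ => (hasDerivAt_pow n y).const_mul _) ?_ ?_
      (pant_summable_pt hα hα1 0) ?_
    · intro n y hy
      rw [Metric.mem_ball, Real.dist_eq, sub_zero] at hy
      exact pant_deriv_bound hα hα1 y hR1 n hy
    · rw [Metric.mem_ball, Real.dist_eq, sub_zero]; simp only [hRdef, abs_zero]; positivity
    · rw [Metric.mem_ball, Real.dist_eq, sub_zero]; simp [hRdef]
  convert hder using 1
  -- identify the derivative value
  have hT : Summable (fun n : ℕ => pantC α β n * ((n : ℝ) * x ^ (n - 1))) := by
    refine Summable.of_norm_bounded hu (fun n => ?_)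
    exact pant_deriv_bound hα hα1 x hR1 n (by simp [hRdef])
  symm
  rw [hT.tsum_eq_zero_add]
  simp only [Nat.cast_zero, zero_mul, mul_zero, zero_add, Nat.add_sub_cancel]
  rw [← tsum_mul_left]
  refine tsum_congr fun n => ?_
  push_cast
  rw [mul_pow]
  linear_combination x ^ n * pant_rec α β n

end main

section series
variable {α β : ℝ}

noncomputable def pantP (α β : ℝ) : FormalMultilinearSeries ℝ ℝ ℝ :=
  FormalMultilinearSeries.ofScalars ℝ (pantC α β)

lemma pantP_radius (hα : 0 < α) (hα1 : α < 1) : (pantP α β).radius = ⊤ := by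
  apply FormalMultilinearSeries.radius_eq_top_of_summable_norm
  intro r
  refine Summable.of_nonneg_of_le (fun n => by positivity) (fun n => ?_)
    (pant_summable_master α β hα.le hα1.le r r.coe_nonneg)
  rw [pantP, FormalMultilinearSeries.ofScalars_norm, Real.norm_eq_abs]
  have h1 : (1:ℝ) ≤ (n:ℝ) + 1 := by have := Nat.cast_nonneg (α := ℝ) n; linarith
  nlinarith [abs_nonneg (pantC α β n), pow_nonneg r.coe_nonneg n,
    mul_nonneg (abs_nonneg (pantC α β n)) (pow_nonneg r.coe_nonneg n)]

lemma pant_hasBall (hα : 0 < α) (hα1 : α < 1) :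
    HasFPowerSeriesOnBall (fun x : ℝ => ∑' n : ℕ, pantC α β n * x ^ n) (pantP α β) 0 ⊤ := by
  have h := (pantP α β).hasFPowerSeriesOnBall
    (by rw [pantP_radius hα hα1]; exact ENNReal.zero_lt_top)
  rw [pantP_radius hα hα1] at h
  convert h using 1
  funext x
  have := FormalMultilinearSeries.ofScalars_sum_eq (𝕜 := ℝ) (pantC α β) x
  simp only [smul_eq_mul] at this
  exact this.symm

lemma pant_analytic (hα : 0 < α) (hα1 : α < 1) :
    AnalyticOnNhd ℝ (fun x : ℝ => ∑' n : ℕ, pantC α β n * x ^ n) Set.univ :=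
  fun x _ => (pant_hasBall hα hα1).analyticAt_of_mem (EMetric.mem_ball.mpr (edist_lt_top x 0))

lemma analytic_contDiff {y : ℝ → ℝ} (hy : AnalyticOnNhd ℝ y Set.univ) (n : ℕ) :
    ContDiff ℝ n y :=
  contDiff_iff_contDiffAt.mpr fun x => (hy x trivial).contDiffAt

lemma sol_iter {y : ℝ → ℝ} (hy : AnalyticOnNhd ℝ y Set.univ)
    (h' : ∀ x, HasDerivAt y (β * y (α * x)) x) (n : ℕ) :
    iteratedDeriv (n + 1) y 0 = β * α ^ n * iteratedDeriv n y 0 := by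
  have hder : deriv y = fun x => β * y (α * x) := funext fun x => (h' x).deriv
  rw [iteratedDeriv_succ', hder]
  have hcd : ContDiff ℝ n y := analytic_contDiff hy n
  have hcomp : iteratedDeriv n (fun x => y (α * x))
      = fun x => α ^ n * iteratedDeriv n y (α * x) := iteratedDeriv_comp_const_mul hcd α
  have hg : ContDiff ℝ n (fun x => y (α * x)) := by
    have : ContDiff ℝ n (fun x : ℝ => α * x) := (contDiff_const.mul contDiff_id)
    exact hcd.comp this
  have hβ : iteratedDeriv n (fun x => β * y (α * x)) 0
      = β * iteratedDeriv n (fun x => y (α * x)) 0 := by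
    rw [← iteratedDerivWithin_univ, ← iteratedDerivWithin_univ]
    exact iteratedDerivWithin_const_mul (Set.mem_univ 0) uniqueDiffOn_univ β hg.contDiffWithinAt
  rw [hβ, hcomp]
  simp [mul_zero]
  ring

lemma sol_iter_eq {y z : ℝ → ℝ} (hy : AnalyticOnNhd ℝ y Set.univ)
    (hz : AnalyticOnNhd ℝ z Set.univ)
    (hy' : ∀ x, HasDerivAt y (β * y (α * x)) x)
    (hz' : ∀ x, HasDerivAt z (β * z (α * x)) x)
    (hy0 : y 0 = 1) (hz0 : z 0 = 1) (n : ℕ) :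
    iteratedDeriv n y 0 = iteratedDeriv n z 0 := by
  induction n with
  | zero => simp [hy0, hz0]
  | succ n ih => rw [sol_iter hy hy', sol_iter hz hz', ih]

end series

lemma iteratedFDeriv_diag_eq (g : ℝ → ℝ) (n : ℕ) (t : ℝ) :
    iteratedFDeriv ℝ n g 0 (fun _ => t) = t ^ n • iteratedDeriv n g 0 := by
  have h : (fun _ : Fin n => t) = fun i : Fin n => t • (fun _ : Fin n => (1:ℝ)) i := by
    funext i; simp
  rw [h, ContinuousMultilinearMap.map_smul_univ, iteratedDeriv_eq_iteratedFDeriv]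
  simp [Finset.prod_const]

lemma pant_unique {α β : ℝ} (hα : 0 < α) (hα1 : α < 1) {y : ℝ → ℝ}
    (hyA : AnalyticOnNhd ℝ y Set.univ)
    (hy' : ∀ x, HasDerivAt y (β * y (α * x)) x) (hy0 : y 0 = 1) :
    ∀ x : ℝ, y x = ∑' n : ℕ, pantC α β n * x ^ n := by
  set f : ℝ → ℝ := fun x => ∑' n : ℕ, pantC α β n * x ^ n with hfdef
  have hfA : AnalyticOnNhd ℝ f Set.univ := pant_analytic hα hα1
  have hf' : ∀ x, HasDerivAt f (β * f (α * x)) x := fun x => pant_hasDerivAt hα hα1 x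
  have hf0 : f 0 = 1 := by
    show (∑' n : ℕ, pantC α β n * (0:ℝ) ^ n) = 1
    rw [tsum_eq_single 0 (fun n hn => by simp [zero_pow hn])]
    simp [pantC]
  obtain ⟨p_y, hpy⟩ := hyA 0 trivial
  obtain ⟨r, hbr⟩ := hpy
  have hbf : HasFPowerSeriesOnBall f (pantP α β) 0 r :=
    (pant_hasBall hα hα1).mono hbr.r_pos le_top
  have hev : y =ᶠ[nhds 0] f := by
    filter_upwards [EMetric.ball_mem_nhds (0:ℝ) hbr.r_pos] with t ht
    have h1 := hbr.hasSum_iteratedFDeriv ht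
    have h2 := hbf.hasSum_iteratedFDeriv ht
    have hterm : (fun n => ((n.factorial : ℝ))⁻¹ • iteratedFDeriv ℝ n y 0 fun _ => t)
        = (fun n => ((n.factorial : ℝ))⁻¹ • iteratedFDeriv ℝ n f 0 fun _ => t) := by
      funext n
      rw [iteratedFDeriv_diag_eq, iteratedFDeriv_diag_eq,
        sol_iter_eq hyA hfA hy' hf' hy0 hf0 n]
    rw [hterm] at h1
    have := h1.unique h2
    simpa using this
  intro x
  exact hyA.eqOn_of_preconnected_of_eventuallyEq hfA isPreconnected_univ
    (Set.mem_univ 0) hev (Set.mem_univ x)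

/-- `y(x) = E_α(βx)` is the unique analytic solution of
`y'(x) = β y(αx)`, `y(0) = 1`. -/
theorem Ea_unique_solution (α β : ℝ) (hα : 0 < α) (hα1 : α < 1) :
    ((∀ x : ℝ, HasDerivAt (fun t => Ea α (β * t)) (β * Ea α (β * (α * x))) x) ∧
      Ea α (β * 0) = 1) ∧
    ∀ y : ℝ → ℝ, AnalyticOnNhd ℝ y Set.univ →
      (∀ x : ℝ, HasDerivAt y (β * y (α * x)) x) → y 0 = 1 →
      ∀ x : ℝ, y x = Ea α (β * x) := by
  have hfe : ∀ t : ℝ, Ea α (β * t) = ∑' n : ℕ, pantC α β n * t ^ n := Ea_eq_tsum hα hα1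
  refine ⟨⟨fun x => ?_, ?_⟩, fun y hyA hy' hy0 x => ?_⟩
  · have h := pant_hasDerivAt (β := β) hα hα1 x
    have hfun : (fun t => Ea α (β * t)) = fun t => ∑' n : ℕ, pantC α β n * t ^ n :=
      funext hfe
    rw [hfun, hfe (α * x)]
    exact h
  · rw [hfe 0]
    rw [tsum_eq_single 0 (fun n hn => by simp [zero_pow hn])]
    simp [pantC]
  · rw [hfe x]
    exact pant_unique hα hα1 hyA hy' hy0 x
end

section
/- For 0 < α ≤ 1 and all real x, C_α'(x) = -S_α(αx) and S_α'(x) = C_α(αx). -/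
set_option maxHeartbeats 1000000

/-- The cosine-like function `C_α`. -/
noncomputable def Ca (α : ℝ) (x : ℝ) : ℝ :=
  ∑' n : ℕ, (-1 : ℝ) ^ n * α ^ (n * (2 * n - 1)) * x ^ (2 * n) / ((2 * n).factorial : ℝ)

/-- The sine-like function `S_α`. -/
noncomputable def Sa (α : ℝ) (x : ℝ) : ℝ :=
  ∑' n : ℕ, (-1 : ℝ) ^ n * α ^ (n * (2 * n + 1)) * x ^ (2 * n + 1) / ((2 * n + 1).factorial : ℝ)

/-- For `0 < α ≤ 1`: `C_α'(x) = -S_α(αx)` and `S_α'(x) = C_α(αx)`. -/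
theorem Ca_Sa_deriv (α : ℝ) (hα : 0 < α) (hα1 : α ≤ 1) (x : ℝ) :
    HasDerivAt (Ca α) (-(Sa α (α * x))) x ∧ HasDerivAt (Sa α) (Ca α (α * x)) x := by
  obtain ⟨R, hR1, hxmem⟩ : ∃ R : ℝ, 1 ≤ R ∧ x ∈ Set.Ioo (-R) R := by
    refine ⟨|x| + 1, le_add_of_nonneg_left (abs_nonneg x), ?_, ?_⟩
    · have := neg_abs_le x; linarith
    · have := le_abs_self x; linarith
  have hR0 : (0 : ℝ) < R := lt_of_lt_of_le one_pos hR1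
  have hα' : |α| ≤ 1 := by rw [abs_of_pos hα]; exact hα1
  have habs : ∀ (e k : ℕ) (y : ℝ), |y| ≤ R → |α| ^ e * |y| ^ k ≤ R ^ k := by
    intro e k y hy
    calc |α| ^ e * |y| ^ k ≤ 1 * R ^ k :=
          mul_le_mul (pow_le_one₀ (abs_nonneg α) hα')
            (pow_le_pow_left₀ (abs_nonneg y) hy k) (by positivity) one_pos.le
      _ = R ^ k := one_mul _
  -- summable majorant
  have hu : Summable (fun n : ℕ => (2 * R) ^ (2 * n) / ((2 * n).factorial : ℝ)) := by
    have h := Real.summable_pow_div_factorial (2 * R)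
    exact h.comp_injective (fun a b h => by omega)
  have huR : Summable (fun n : ℕ => R * ((2 * R) ^ (2 * n) / ((2 * n).factorial : ℝ))) :=
    hu.mul_left R
  have hRy : ∀ y ∈ Set.Ioo (-R) R, |y| ≤ R := by
    intro y hy
    rw [abs_le]; exact ⟨hy.1.le, hy.2.le⟩
  have hxR : |x| ≤ R := hRy x hxmem
  constructor
  · -- derivative of Ca
    set g' : ℕ → ℝ → ℝ := fun n y =>
      (-1 : ℝ) ^ n * α ^ (n * (2 * n - 1)) * ((2 * n : ℕ) * y ^ (2 * n - 1)) /
        ((2 * n).factorial : ℝ) with hg'def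
    have hbound : ∀ n : ℕ, ∀ y ∈ Set.Ioo (-R) R,
        ‖g' n y‖ ≤ (2 * R) ^ (2 * n) / ((2 * n).factorial : ℝ) := by
      intro n y hy
      have hy' := hRy y hy
      rw [hg'def]
      simp only [Real.norm_eq_abs, abs_div, abs_mul, abs_pow, abs_neg, abs_one, one_pow, one_mul,
        Nat.abs_cast]
      have hnum : |α| ^ (n * (2 * n - 1)) * ((2 * n : ℕ) * |y| ^ (2 * n - 1)) ≤
          (2 * R) ^ (2 * n) := by
        have h1 : |α| ^ (n * (2 * n - 1)) * |y| ^ (2 * n - 1) ≤ R ^ (2 * n - 1) :=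
          habs _ _ y hy'
        have ha : ((2 * n : ℕ) : ℝ) ≤ 2 ^ (2 * n) := by
          exact_mod_cast (Nat.lt_two_pow_self (n := 2 * n)).le
        have hb : R ^ (2 * n - 1) ≤ R ^ (2 * n) :=
          pow_le_pow_right₀ hR1 (Nat.sub_le _ _)
        calc |α| ^ (n * (2 * n - 1)) * ((2 * n : ℕ) * |y| ^ (2 * n - 1))
            = ((2 * n : ℕ) : ℝ) * (|α| ^ (n * (2 * n - 1)) * |y| ^ (2 * n - 1)) := by ring
          _ ≤ ((2 * n : ℕ) : ℝ) * R ^ (2 * n - 1) := by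
              exact mul_le_mul_of_nonneg_left h1 (by positivity)
          _ ≤ 2 ^ (2 * n) * R ^ (2 * n) :=
              mul_le_mul ha hb (by positivity) (by positivity)
          _ = (2 * R) ^ (2 * n) := (mul_pow 2 R (2 * n)).symm
      exact div_le_div₀ (by positivity) hnum
        (by exact_mod_cast Nat.factorial_pos _) le_rfl
    have hsum0 : Summable (fun n : ℕ =>
        (-1 : ℝ) ^ n * α ^ (n * (2 * n - 1)) * x ^ (2 * n) / ((2 * n).factorial : ℝ)) := by
      apply Summable.of_norm_bounded hu
      intro n
      simp only [Real.norm_eq_abs, abs_div, abs_mul, abs_pow, abs_neg, abs_one, one_pow, one_mul,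
        Nat.abs_cast]
      have hnum : |α| ^ (n * (2 * n - 1)) * |x| ^ (2 * n) ≤ (2 * R) ^ (2 * n) := by
        calc |α| ^ (n * (2 * n - 1)) * |x| ^ (2 * n) ≤ R ^ (2 * n) := habs _ _ x hxR
          _ ≤ (2 * R) ^ (2 * n) := pow_le_pow_left₀ hR0.le (by linarith) _
      exact div_le_div₀ (by positivity) hnum
        (by exact_mod_cast Nat.factorial_pos _) le_rfl
    have hderiv : HasDerivAt (fun z => ∑' n : ℕ,
        (-1 : ℝ) ^ n * α ^ (n * (2 * n - 1)) * z ^ (2 * n) / ((2 * n).factorial : ℝ))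
        (∑' n, g' n x) x := by
      apply hasDerivAt_tsum_of_isPreconnected hu isOpen_Ioo (convex_Ioo _ _).isPreconnected
        _ hbound hxmem hsum0 hxmem
      intro n y _
      exact ((hasDerivAt_pow (2 * n) y).const_mul
        ((-1 : ℝ) ^ n * α ^ (n * (2 * n - 1)))).div_const _
    have hsumg' : Summable (fun n => g' n x) :=
      Summable.of_norm_bounded hu (fun n => hbound n x hxmem)
    have key : ∑' n, g' n x = -(Sa α (α * x)) := by
      rw [Summable.tsum_eq_zero_add hsumg']
      have h0 : g' 0 x = 0 := by simp [hg'def]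
      rw [h0, zero_add, Sa, ← tsum_neg]
      apply tsum_congr
      intro n
      rw [hg'def]
      simp only
      have e1 : 2 * (n + 1) - 1 = 2 * n + 1 := by omega
      have e2 : (n + 1) * (2 * n + 1) = n * (2 * n + 1) + (2 * n + 1) := by ring
      have e3 : 2 * (n + 1) = (2 * n + 1) + 1 := by omega
      rw [e1, e2, e3, Nat.factorial_succ]
      have hfac : ((2 * n + 1).factorial : ℝ) ≠ 0 := Nat.cast_ne_zero.2 (Nat.factorial_ne_zero _)
      rw [pow_succ (-1 : ℝ), pow_add, mul_pow]
      push_cast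
      field_simp
    rw [← key]; exact hderiv
  · -- derivative of Sa
    set g' : ℕ → ℝ → ℝ := fun n y =>
      (-1 : ℝ) ^ n * α ^ (n * (2 * n + 1)) * ((2 * n + 1 : ℕ) * y ^ (2 * n + 1 - 1)) /
        ((2 * n + 1).factorial : ℝ) with hg'def
    have hfaceq : ∀ n : ℕ, ((2 * n + 1).factorial : ℝ) =
        ((2 * n + 1 : ℕ) : ℝ) * ((2 * n).factorial : ℝ) := by
      intro n; rw [Nat.factorial_succ]; push_cast; ring
    have hbound : ∀ n : ℕ, ∀ y ∈ Set.Ioo (-R) R,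
        ‖g' n y‖ ≤ (2 * R) ^ (2 * n) / ((2 * n).factorial : ℝ) := by
      intro n y hy
      have hy' := hRy y hy
      rw [hg'def]
      simp only
      have e : 2 * n + 1 - 1 = 2 * n := by omega
      rw [e]
      simp only [Real.norm_eq_abs, abs_div, abs_mul, abs_pow, abs_neg, abs_one, one_pow, one_mul,
        Nat.abs_cast]
      have hnum : |α| ^ (n * (2 * n + 1)) * ((2 * n + 1 : ℕ) * |y| ^ (2 * n)) ≤
          ((2 * n + 1 : ℕ) : ℝ) * (2 * R) ^ (2 * n) := by
        calc |α| ^ (n * (2 * n + 1)) * ((2 * n + 1 : ℕ) * |y| ^ (2 * n))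
            = ((2 * n + 1 : ℕ) : ℝ) * (|α| ^ (n * (2 * n + 1)) * |y| ^ (2 * n)) := by ring
          _ ≤ ((2 * n + 1 : ℕ) : ℝ) * R ^ (2 * n) :=
              mul_le_mul_of_nonneg_left (habs _ _ y hy') (by positivity)
          _ ≤ ((2 * n + 1 : ℕ) : ℝ) * (2 * R) ^ (2 * n) :=
              mul_le_mul_of_nonneg_left (pow_le_pow_left₀ hR0.le (by linarith) _) (by positivity)
      calc |α| ^ (n * (2 * n + 1)) * ((2 * n + 1 : ℕ) * |y| ^ (2 * n)) /
            ((2 * n + 1).factorial : ℝ) ≤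
          ((2 * n + 1 : ℕ) : ℝ) * (2 * R) ^ (2 * n) / ((2 * n + 1).factorial : ℝ) := by
            gcongr
        _ = (2 * R) ^ (2 * n) / ((2 * n).factorial : ℝ) := by
            rw [hfaceq n]
            have h1 : ((2 * n + 1 : ℕ) : ℝ) ≠ 0 := by positivity
            have h2 : ((2 * n).factorial : ℝ) ≠ 0 :=
              Nat.cast_ne_zero.2 (Nat.factorial_ne_zero _)
            field_simp
            try push_cast
            try ring
    have hsum0 : Summable (fun n : ℕ =>
        (-1 : ℝ) ^ n * α ^ (n * (2 * n + 1)) * x ^ (2 * n + 1) / ((2 * n + 1).factorial : ℝ)) := by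
      apply Summable.of_norm_bounded huR
      intro n
      simp only [Real.norm_eq_abs, abs_div, abs_mul, abs_pow, abs_neg, abs_one, one_pow, one_mul,
        Nat.abs_cast]
      have hfle : ((2 * n).factorial : ℝ) ≤ ((2 * n + 1).factorial : ℝ) := by
        exact_mod_cast Nat.factorial_le (by omega : 2 * n ≤ 2 * n + 1)
      have hfpos : (0 : ℝ) < ((2 * n).factorial : ℝ) := by
        exact_mod_cast Nat.factorial_pos _
      have hnum : |α| ^ (n * (2 * n + 1)) * |x| ^ (2 * n + 1) ≤ R * (2 * R) ^ (2 * n) := by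
        calc |α| ^ (n * (2 * n + 1)) * |x| ^ (2 * n + 1) ≤ R ^ (2 * n + 1) := habs _ _ x hxR
          _ = R * R ^ (2 * n) := by rw [pow_succ]; ring
          _ ≤ R * (2 * R) ^ (2 * n) :=
              mul_le_mul_of_nonneg_left (pow_le_pow_left₀ hR0.le (by linarith) _) hR0.le
      calc |α| ^ (n * (2 * n + 1)) * |x| ^ (2 * n + 1) / ((2 * n + 1).factorial : ℝ) ≤
          R * (2 * R) ^ (2 * n) / ((2 * n).factorial : ℝ) :=
            div_le_div₀ (by positivity) hnum hfpos hfle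
        _ = R * ((2 * R) ^ (2 * n) / ((2 * n).factorial : ℝ)) := by ring
    have hderiv : HasDerivAt (fun z => ∑' n : ℕ,
        (-1 : ℝ) ^ n * α ^ (n * (2 * n + 1)) * z ^ (2 * n + 1) / ((2 * n + 1).factorial : ℝ))
        (∑' n, g' n x) x := by
      exact hasDerivAt_tsum_of_isPreconnected hu isOpen_Ioo (convex_Ioo _ _).isPreconnected
        (fun n y _ => ((hasDerivAt_pow (2 * n + 1) y).const_mul
          ((-1 : ℝ) ^ n * α ^ (n * (2 * n + 1)))).div_const _) hbound hxmem hsum0 hxmem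
    have key : ∑' n, g' n x = Ca α (α * x) := by
      rw [Ca]
      apply tsum_congr
      intro n
      rw [hg'def]
      simp only
      have e : 2 * n + 1 - 1 = 2 * n := by omega
      have e2 : n * (2 * n + 1) = n * (2 * n - 1) + 2 * n := by
        cases n with
        | zero => rfl
        | succ m =>
          have h : 2 * (m + 1) - 1 = 2 * m + 1 := by omega
          rw [h]; ring
      rw [e, e2, pow_add, mul_pow, hfaceq n]
      have h1 : ((2 * n + 1 : ℕ) : ℝ) ≠ 0 := by positivity
      have hfac : ((2 * n).factorial : ℝ) ≠ 0 := Nat.cast_ne_zero.2 (Nat.factorial_ne_zero _)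
      push_cast
      field_simp
    rw [← key]; exact hderiv
end

section
/- For 0 < α ≤ 1 and all real x, C_α''(x) = -α C_α(α² x) and S_α''(x) = -α S_α(α² x). -/
open Metric

private lemma summable_aux1 (R : ℝ) : Summable (fun n : ℕ => (n : ℝ) * R ^ n / n.factorial) := by
  rw [← summable_nat_add_iff 1]
  have h := (Real.summable_pow_div_factorial R).mul_left R
  refine h.congr fun n => ?_
  have hf : ((n + 1).factorial : ℝ) = (n + 1) * n.factorial := by
    rw [Nat.factorial_succ]; push_cast; ring
  have h1 : (n.factorial : ℝ) ≠ 0 := by positivity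
  rw [hf]
  push_cast
  rw [pow_succ]
  field_simp

private lemma bound_aux (c : ℕ → ℝ) (hc : ∀ n, |c n| ≤ (n.factorial : ℝ)⁻¹)
    (R : ℝ) (hR : 1 ≤ R) (y : ℝ) (hy : |y| ≤ R) (n : ℕ) :
    ‖c n * ((n : ℝ) * y ^ (n - 1))‖ ≤ (n : ℝ) * R ^ n / n.factorial := by
  have hR0 : (0:ℝ) ≤ R := le_trans zero_le_one hR
  have h1 : |y| ^ (n - 1) ≤ R ^ n :=
    le_trans (pow_le_pow_left₀ (abs_nonneg y) hy _) (pow_le_pow_right₀ hR (Nat.sub_le n 1))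
  calc ‖c n * ((n : ℝ) * y ^ (n - 1))‖ = |c n| * ((n : ℝ) * |y| ^ (n - 1)) := by
        simp [Real.norm_eq_abs, abs_mul, abs_pow]
    _ ≤ (n.factorial : ℝ)⁻¹ * ((n : ℝ) * R ^ n) := by
        apply mul_le_mul (hc n) _ (by positivity) (by positivity)
        exact mul_le_mul_of_nonneg_left h1 (Nat.cast_nonneg n)
    _ = (n : ℝ) * R ^ n / n.factorial := by rw [div_eq_mul_inv]; ring

private lemma summable_F (c : ℕ → ℝ) (hc : ∀ n, |c n| ≤ (n.factorial : ℝ)⁻¹) (y : ℝ) :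
    Summable fun n => c n * y ^ n := by
  apply Summable.of_norm_bounded (Real.summable_pow_div_factorial |y|)
  intro n
  calc ‖c n * y ^ n‖ = |c n| * |y| ^ n := by simp [Real.norm_eq_abs, abs_mul, abs_pow]
    _ ≤ (n.factorial : ℝ)⁻¹ * |y| ^ n := by
        exact mul_le_mul_of_nonneg_right (hc n) (by positivity)
    _ = |y| ^ n / n.factorial := by rw [div_eq_mul_inv]; ring

private lemma hc_shift (c : ℕ → ℝ) (hc : ∀ n, |c n| ≤ (n.factorial : ℝ)⁻¹) (n : ℕ) :
    |((n : ℝ) + 1) * c (n + 1)| ≤ (n.factorial : ℝ)⁻¹ := by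
  have hf : ((n + 1).factorial : ℝ) = ((n : ℝ) + 1) * n.factorial := by
    rw [Nat.factorial_succ]; push_cast; ring
  have h1 : (0:ℝ) < (n : ℝ) + 1 := by positivity
  have h2 : (0:ℝ) < (n.factorial : ℝ) := by positivity
  calc |((n : ℝ) + 1) * c (n + 1)| = ((n : ℝ) + 1) * |c (n + 1)| := by
        rw [abs_mul, abs_of_pos h1]
    _ ≤ ((n : ℝ) + 1) * ((n + 1).factorial : ℝ)⁻¹ :=
        mul_le_mul_of_nonneg_left (hc (n + 1)) h1.le
    _ = (n.factorial : ℝ)⁻¹ := by rw [hf]; field_simp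

private lemma hasDerivAt_F (c : ℕ → ℝ) (hc : ∀ n, |c n| ≤ (n.factorial : ℝ)⁻¹) (x : ℝ) :
    HasDerivAt (fun y => ∑' n : ℕ, c n * y ^ n) (∑' n : ℕ, ((n : ℝ) + 1) * c (n + 1) * x ^ n) x := by
  set R : ℝ := |x| + 1 with hRdef
  have hR1 : 1 ≤ R := by rw [hRdef]; linarith [abs_nonneg x]
  have hxR : |x| < R := by rw [hRdef]; linarith
  have hsum_u : Summable (fun n : ℕ => (n : ℝ) * R ^ n / n.factorial) := summable_aux1 R
  have key : HasDerivAt (fun y => ∑' n : ℕ, c n * y ^ n) (∑' n : ℕ, c n * ((n : ℝ) * x ^ (n - 1))) x := by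
    apply hasDerivAt_tsum_of_isPreconnected hsum_u Metric.isOpen_ball
      (convex_ball (0:ℝ) R).isPreconnected
      (fun n y _ => (hasDerivAt_pow n y).const_mul (c n))
      (fun n y hy => bound_aux c hc R hR1 y (le_of_lt (by simpa using mem_ball_zero_iff.mp hy)) n)
      (mem_ball_self (by linarith))
      (summable_F c hc 0)
      (mem_ball_zero_iff.mpr (by simpa using hxR))
  have hs : Summable (fun n => c n * ((n : ℝ) * x ^ (n - 1))) :=
    Summable.of_norm_bounded hsum_u (fun n => bound_aux c hc R hR1 x hxR.le n)
  have heq : (∑' n : ℕ, c n * ((n : ℝ) * x ^ (n - 1))) = ∑' n : ℕ, ((n : ℝ) + 1) * c (n + 1) * x ^ n := by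
    rw [Summable.tsum_eq_zero_add hs]
    simp only [Nat.cast_zero, zero_mul, mul_zero, zero_add]
    apply tsum_congr
    intro n
    have : n + 1 - 1 = n := rfl
    rw [this]
    push_cast
    ring
  rw [heq] at key
  exact key

noncomputable def cC (α : ℝ) (m : ℕ) : ℝ :=
  if 2 ∣ m then (-1 : ℝ) ^ (m / 2) * α ^ ((m / 2) * (m - 1)) / m.factorial else 0

noncomputable def cS (α : ℝ) (m : ℕ) : ℝ :=
  if 2 ∣ m then 0 else (-1 : ℝ) ^ (m / 2) * α ^ ((m / 2) * m) / m.factorial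

private lemma hcC (α : ℝ) (hα : 0 < α) (hα1 : α ≤ 1) (m : ℕ) :
    |cC α m| ≤ (m.factorial : ℝ)⁻¹ := by
  rw [cC]
  split
  · rw [abs_div, abs_mul, abs_pow, abs_pow, abs_neg, abs_one, one_pow, one_mul,
      abs_of_pos hα, abs_of_pos (by positivity : (0:ℝ) < (m.factorial : ℝ))]
    rw [← one_div]
    gcongr
    exact pow_le_one₀ hα.le hα1
  · simp

private lemma hcS (α : ℝ) (hα : 0 < α) (hα1 : α ≤ 1) (m : ℕ) :
    |cS α m| ≤ (m.factorial : ℝ)⁻¹ := by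
  rw [cS]
  split
  · simp
  · rw [abs_div, abs_mul, abs_pow, abs_pow, abs_neg, abs_one, one_pow, one_mul,
      abs_of_pos hα, abs_of_pos (by positivity : (0:ℝ) < (m.factorial : ℝ))]
    rw [← one_div]
    gcongr
    exact pow_le_one₀ hα.le hα1

private lemma Ca_eq (α x : ℝ) : Ca α x = ∑' m : ℕ, cC α m * x ^ m := by
  rw [Ca, ← Function.Injective.tsum_eq (f := fun m : ℕ => cC α m * x ^ m)
    (g := fun n : ℕ => 2 * n) (fun a b h => by simp only at h; omega) ?_]
  · apply tsum_congr
    intro n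
    simp only [cC]
    rw [if_pos ⟨n, rfl⟩]
    have h1 : 2 * n / 2 = n := by omega
    rw [h1]
    ring
  · intro m hm
    by_contra hmem
    apply hm
    have h2 : ¬ 2 ∣ m := by
      rintro ⟨k, rfl⟩
      exact hmem ⟨k, rfl⟩
    simp [cC, h2]

private lemma Sa_eq (α x : ℝ) : Sa α x = ∑' m : ℕ, cS α m * x ^ m := by
  rw [Sa, ← Function.Injective.tsum_eq (f := fun m : ℕ => cS α m * x ^ m)
    (g := fun n : ℕ => 2 * n + 1) (fun a b h => by simp only at h; omega) ?_]
  · apply tsum_congr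
    intro n
    simp only [cS]
    rw [if_neg (by omega)]
    have h1 : (2 * n + 1) / 2 = n := by omega
    rw [h1]
    ring
  · intro m hm
    by_contra hmem
    apply hm
    have h2 : 2 ∣ m := by
      rcases Nat.even_or_odd m with h | h
      · exact h.two_dvd
      · obtain ⟨k, rfl⟩ := h
        exact absurd ⟨k, rfl⟩ hmem
    simp [cS, h2]

/-- For `0 < α ≤ 1`: `C_α''(x) = -α C_α(α²x)` and `S_α''(x) = -α S_α(α²x)`. -/
theorem Ca_Sa_deriv2 (α : ℝ) (hα : 0 < α) (hα1 : α ≤ 1) (x : ℝ) :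
    deriv (deriv (Ca α)) x = -α * Ca α (α ^ 2 * x) ∧
    deriv (deriv (Sa α)) x = -α * Sa α (α ^ 2 * x) := by
  constructor
  · have hc0 : ∀ n, |cC α n| ≤ (n.factorial : ℝ)⁻¹ := hcC α hα hα1
    set c1 : ℕ → ℝ := fun n => ((n : ℝ) + 1) * cC α (n + 1) with hc1def
    have hc1 : ∀ n, |c1 n| ≤ (n.factorial : ℝ)⁻¹ := hc_shift _ hc0
    have hd1 : deriv (Ca α) = fun y => ∑' n : ℕ, c1 n * y ^ n := by
      funext y
      have hCf : Ca α = fun y => ∑' n : ℕ, cC α n * y ^ n := funext fun y => Ca_eq α y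
      rw [hCf]
      exact (hasDerivAt_F (cC α) hc0 y).deriv
    have hd2 : deriv (deriv (Ca α)) x = ∑' n : ℕ, ((n : ℝ) + 1) * c1 (n + 1) * x ^ n := by
      rw [hd1]
      exact (hasDerivAt_F c1 hc1 x).deriv
    rw [hd2, Ca, ← tsum_mul_left]
    rw [← Function.Injective.tsum_eq (f := fun m : ℕ => ((m : ℝ) + 1) * c1 (m + 1) * x ^ m)
      (g := fun n : ℕ => 2 * n) (fun a b h => by simp only at h; omega) ?_]
    · apply tsum_congr
      intro n
      simp only [hc1def]
      have e1 : cC α (2 * n + 1 + 1) =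
          (-1 : ℝ) ^ (n + 1) * α ^ ((n + 1) * (2 * n + 1)) / ((2 * n + 2).factorial : ℝ) := by
        rw [cC, if_pos (by omega : 2 ∣ (2 * n + 1 + 1))]
        have h1 : (2 * n + 1 + 1) / 2 = n + 1 := by omega
        have h2 : 2 * n + 1 + 1 - 1 = 2 * n + 1 := by omega
        rw [h1, h2]
      have e2 : ((2 * n + 2).factorial : ℝ) =
          (2 * (n : ℝ) + 2) * ((2 * (n : ℝ) + 1) * ((2 * n).factorial : ℝ)) := by
        have h3 : (2 * n + 2).factorial = (2 * n + 2) * ((2 * n + 1) * (2 * n).factorial) := by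
          rw [show 2 * n + 2 = (2 * n + 1) + 1 from rfl, Nat.factorial_succ, Nat.factorial_succ]
        rw [h3]; push_cast; ring
      have e3 : α ^ ((n + 1) * (2 * n + 1)) = α * (α ^ (n * (2 * n - 1)) * (α ^ 2) ^ (2 * n)) := by
        have hexp : (n + 1) * (2 * n + 1) = 1 + (n * (2 * n - 1) + 2 * (2 * n)) := by
          cases n with
          | zero => rfl
          | succ m =>
            have h : 2 * (m + 1) - 1 = 2 * m + 1 := by omega
            rw [h]; ring
        rw [hexp, pow_add, pow_add, pow_one, pow_mul, pow_mul]
      have hne : ((2 * n).factorial : ℝ) ≠ 0 := by positivity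
      rw [e1, e2, e3, mul_pow, pow_succ]
      push_cast
      field_simp
      ring
    · intro m hm
      by_contra hmem
      apply hm
      have h2 : ¬ 2 ∣ (m + 1 + 1) := by
        intro hd
        apply hmem
        obtain ⟨k, hk⟩ := hd
        exact ⟨k - 1, by simp only; omega⟩
      simp only [hc1def]
      rw [cC, if_neg h2]
      ring
  · have hc0 : ∀ n, |cS α n| ≤ (n.factorial : ℝ)⁻¹ := hcS α hα hα1
    set c1 : ℕ → ℝ := fun n => ((n : ℝ) + 1) * cS α (n + 1) with hc1def
    have hc1 : ∀ n, |c1 n| ≤ (n.factorial : ℝ)⁻¹ := hc_shift _ hc0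
    have hd1 : deriv (Sa α) = fun y => ∑' n : ℕ, c1 n * y ^ n := by
      funext y
      have hSf : Sa α = fun y => ∑' n : ℕ, cS α n * y ^ n := funext fun y => Sa_eq α y
      rw [hSf]
      exact (hasDerivAt_F (cS α) hc0 y).deriv
    have hd2 : deriv (deriv (Sa α)) x = ∑' n : ℕ, ((n : ℝ) + 1) * c1 (n + 1) * x ^ n := by
      rw [hd1]
      exact (hasDerivAt_F c1 hc1 x).deriv
    rw [hd2, Sa, ← tsum_mul_left]
    rw [← Function.Injective.tsum_eq (f := fun m : ℕ => ((m : ℝ) + 1) * c1 (m + 1) * x ^ m)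
      (g := fun n : ℕ => 2 * n + 1) (fun a b h => by simp only at h; omega) ?_]
    · apply tsum_congr
      intro n
      simp only [hc1def]
      have e1 : cS α (2 * n + 1 + 1 + 1) =
          (-1 : ℝ) ^ (n + 1) * α ^ ((n + 1) * (2 * n + 3)) / ((2 * n + 3).factorial : ℝ) := by
        rw [cS, if_neg (by omega : ¬ 2 ∣ (2 * n + 1 + 1 + 1))]
        have h1 : (2 * n + 1 + 1 + 1) / 2 = n + 1 := by omega
        rw [h1]
      have e2 : ((2 * n + 3).factorial : ℝ) =
          (2 * (n : ℝ) + 3) * ((2 * (n : ℝ) + 2) * ((2 * n + 1).factorial : ℝ)) := by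
        have h3 : (2 * n + 3).factorial = (2 * n + 3) * ((2 * n + 2) * (2 * n + 1).factorial) := by
          rw [show 2 * n + 3 = (2 * n + 2) + 1 from rfl, Nat.factorial_succ, Nat.factorial_succ]
        rw [h3]; push_cast; ring
      have e3 : α ^ ((n + 1) * (2 * n + 3)) =
          α * (α ^ (n * (2 * n + 1)) * (α ^ 2) ^ (2 * n + 1)) := by
        have hexp : (n + 1) * (2 * n + 3) = 1 + (n * (2 * n + 1) + 2 * (2 * n + 1)) := by ring
        rw [hexp, pow_add, pow_add, pow_one, pow_mul, pow_mul]
      have hne : ((2 * n + 1).factorial : ℝ) ≠ 0 := by positivity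
      rw [e1, e2, e3, mul_pow, pow_succ]
      push_cast
      field_simp
      ring
    · intro m hm
      by_contra hmem
      apply hm
      have h2 : 2 ∣ (m + 1 + 1) := by
        rcases Nat.even_or_odd m with h | h
        · obtain ⟨k, hk⟩ := h
          exact ⟨k + 1, by omega⟩
        · obtain ⟨k, rfl⟩ := h
          exact absurd ⟨k, rfl⟩ hmem
      simp only [hc1def]
      rw [cS, if_pos h2]
      ring
end

section
/- The exponent-like function satisfies the infinite addition formula E_α(x+y) = Σ_{n=0}^∞ α^{n(n-1)/2} (x^n/n!) E_α(α^n y) for all real (or complex) x, y. -/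
open Finset

lemma tri_even (n : ℕ) : 2 ∣ n * (n - 1) := by
  cases n with
  | zero => simp
  | succ n =>
    simp only [Nat.succ_sub_one]
    have := Nat.even_mul_succ_self n
    rw [Nat.mul_comm]
    exact this.two_dvd

lemma tri_add (k m : ℕ) :
    (k + m) * ((k + m) - 1) / 2 = k * (k - 1) / 2 + m * (m - 1) / 2 + k * m := by
  have h2 : (k + m) * ((k + m) - 1) = k * (k - 1) + m * (m - 1) + 2 * (k * m) := by
    cases k with
    | zero => simp
    | succ k =>
      cases m with
      | zero => simp
      | succ m =>
        simp only [Nat.succ_sub_one, ← Nat.add_one]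
        have : k + 1 + (m + 1) - 1 = k + m + 1 := by omega
        rw [this]; ring
  have hk := tri_even k
  have hm := tri_even m
  have hkm := tri_even (k + m)
  omega

lemma Ea_summable (c : ℕ → ℝ) (hc : ∀ n, |c n| ≤ 1) (z : ℝ) :
    Summable fun n : ℕ => c n * z ^ n / (n.factorial : ℝ) := by
  apply Summable.of_norm
  apply Summable.of_nonneg_of_le (fun n => norm_nonneg _) _
    (Real.summable_pow_div_factorial |z|)
  intro n
  rw [Real.norm_eq_abs, abs_div, abs_mul, abs_pow, Nat.abs_cast]
  apply div_le_div_of_nonneg_right ?_ (by positivity)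
  exact mul_le_of_le_one_left (by positivity) (hc n)

lemma tsum_prod_eq_tsum_antidiagonal (F : ℕ × ℕ → ℝ) (hF : Summable F) :
    ∑' p : ℕ × ℕ, F p = ∑' n : ℕ, ∑ kl ∈ antidiagonal n, F kl := by
  conv_rhs => congr; ext; rw [← Finset.sum_finset_coe, ← tsum_fintype (L := SummationFilter.unconditional _)]
  rw [← Finset.HasAntidiagonal.sigmaAntidiagonalEquivProd.tsum_eq F]
  exact Summable.tsum_sigma' (fun n => (hasSum_fintype _).summable)
    (Finset.HasAntidiagonal.sigmaAntidiagonalEquivProd.summable_iff.mpr hF)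

/-- The infinite addition formula
`E_α(x+y) = Σ_{n} α^{n(n-1)/2} (xⁿ/n!) E_α(αⁿ y)`. -/
theorem Ea_add (α : ℝ) (hα : 0 < α) (hα1 : α ≤ 1) (x y : ℝ) :
    Ea α (x + y)
      = ∑' n : ℕ, α ^ (n * (n - 1) / 2) * (x ^ n / (n.factorial : ℝ)) * Ea α (α ^ n * y) := by
  have hαe : ∀ e : ℕ, |α ^ e| ≤ 1 := fun e => by
    rw [abs_of_pos (pow_pos hα e)]
    exact pow_le_one₀ hα.le hα1
  set F : ℕ × ℕ → ℝ := fun p =>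
    α ^ (p.1 * (p.1 - 1) / 2 + p.2 * (p.2 - 1) / 2 + p.1 * p.2) * x ^ p.1 * y ^ p.2 /
      ((p.1.factorial : ℝ) * (p.2.factorial : ℝ)) with hFdef
  have hG : Summable fun p : ℕ × ℕ =>
      (|x| ^ p.1 / (p.1.factorial : ℝ)) * (|y| ^ p.2 / (p.2.factorial : ℝ)) :=
    (Real.summable_pow_div_factorial |x|).mul_of_nonneg
      (Real.summable_pow_div_factorial |y|) (fun n => by positivity) (fun n => by positivity)
  have hF : Summable F := by
    rw [← summable_abs_iff]
    apply Summable.of_nonneg_of_le (fun p => abs_nonneg _) _ hG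
    intro p
    rw [hFdef]
    simp only [abs_div, abs_mul, abs_pow, Nat.abs_cast]
    rw [div_mul_div_comm]
    apply div_le_div_of_nonneg_right ?_ (by positivity)
    calc |α| ^ _ * |x| ^ p.1 * |y| ^ p.2 ≤ 1 * |x| ^ p.1 * |y| ^ p.2 := by
          apply mul_le_mul_of_nonneg_right (mul_le_mul_of_nonneg_right ?_ (by positivity))
            (by positivity)
          rw [← abs_pow]; exact hαe _
      _ = |x| ^ p.1 * |y| ^ p.2 := by ring
  calc Ea α (x + y) = ∑' n : ℕ, α ^ (n * (n - 1) / 2) * (x + y) ^ n / (n.factorial : ℝ) := rfl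
    _ = ∑' n : ℕ, ∑ kl ∈ antidiagonal n, F kl := by
        refine tsum_congr fun n => ?_
        rw [Finset.Nat.sum_antidiagonal_eq_sum_range_succ_mk, add_pow, Finset.mul_sum,
          Finset.sum_div]
        refine Finset.sum_congr rfl fun k hk => ?_
        have hkn : k ≤ n := Nat.lt_succ_iff.mp (Finset.mem_range.mp hk)
        have hsub : k + (n - k) = n := Nat.add_sub_cancel' hkn
        have htri : n * (n - 1) / 2 =
            k * (k - 1) / 2 + (n - k) * ((n - k) - 1) / 2 + k * (n - k) := by
          conv_lhs => rw [← hsub]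
          exact tri_add k (n - k)
        have hfac : (n.choose k : ℝ) * (k.factorial : ℝ) * ((n - k).factorial : ℝ)
            = (n.factorial : ℝ) := by exact_mod_cast Nat.choose_mul_factorial_mul_factorial hkn
        have h1 : (k.factorial : ℝ) ≠ 0 := Nat.cast_ne_zero.mpr k.factorial_ne_zero
        have h2 : ((n - k).factorial : ℝ) ≠ 0 := Nat.cast_ne_zero.mpr (n - k).factorial_ne_zero
        have h3 : (n.choose k : ℝ) ≠ 0 := Nat.cast_ne_zero.mpr (Nat.choose_pos hkn).ne'
        rw [hFdef]
        simp only
        rw [htri, pow_add, pow_add, ← hfac]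
        field_simp
    _ = ∑' p : ℕ × ℕ, F p := (tsum_prod_eq_tsum_antidiagonal F hF).symm
    _ = ∑' k : ℕ, ∑' m : ℕ, F (k, m) := Summable.tsum_prod hF
    _ = _ := by
        refine tsum_congr fun k => ?_
        rw [Ea, ← tsum_mul_left]
        refine tsum_congr fun m => ?_
        rw [hFdef]
        simp only
        have hp : (α ^ k * y) ^ m = α ^ (k * m) * y ^ m := by rw [mul_pow, ← pow_mul]
        rw [hp, pow_add, pow_add]
        ring
end

section
/- The cosine-like function satisfies the addition formula C_α(x+y) = Σ_{n=0}^∞ α^{n(2n-1)} (-1)^n x^{2n}/(2n)! · C_α(α^{2n} y) − Σ_{n=0}^∞ α^{n(2n+1)} (-1)^n x^{2n+1}/(2n+1)! · S_α(α^{2n+1} y) for all real x, y. -/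
open Finset

lemma ch_add (j k : ℕ) : (j + k).choose 2 = j.choose 2 + k.choose 2 + j * k := by
  induction j with
  | zero => simp
  | succ j ih =>
    have h1 : (j + 1).choose 2 = j + j.choose 2 := by
      simp [Nat.choose_succ_succ, Nat.choose_one_right]
    have h2 : (j + 1 + k).choose 2 = (j + k) + (j + k).choose 2 := by
      rw [show j + 1 + k = (j + k) + 1 by omega]
      simp [Nat.choose_succ_succ, Nat.choose_one_right]
    rw [h1, h2, ih]; ring

lemma ch_even (m : ℕ) : (2 * m).choose 2 = m * (2 * m - 1) := by
  rw [Nat.choose_two_right, mul_assoc, Nat.mul_div_cancel_left _ (by norm_num)]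

lemma ch_odd (m : ℕ) : (2 * m + 1).choose 2 = m * (2 * m + 1) := by
  rw [Nat.choose_two_right, Nat.add_sub_cancel,
    show (2 * m + 1) * (2 * m) = 2 * (m * (2 * m + 1)) by ring,
    Nat.mul_div_cancel_left _ (by norm_num)]

lemma sum_antidiag_pow (z w : ℝ) (n : ℕ) :
    ∑ kl ∈ Finset.HasAntidiagonal.antidiagonal n,
        z ^ kl.1 * w ^ kl.2 / ((kl.1.factorial : ℝ) * kl.2.factorial)
      = (z + w) ^ n / n.factorial := by
  rw [add_pow, Finset.sum_div, Finset.Nat.sum_antidiagonal_eq_sum_range_succ_mk]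
  refine Finset.sum_congr rfl fun i hi => ?_
  have hin : i ≤ n := Nat.lt_succ_iff.mp (Finset.mem_range.mp hi)
  have key : (n.choose i : ℝ) * i.factorial * (n - i).factorial = n.factorial := by
    exact_mod_cast congrArg (Nat.cast (R := ℝ))
      (Nat.choose_mul_factorial_mul_factorial hin)
  have h1 : (i.factorial : ℝ) ≠ 0 := Nat.cast_ne_zero.mpr i.factorial_ne_zero
  have h2 : ((n - i).factorial : ℝ) ≠ 0 := Nat.cast_ne_zero.mpr (n - i).factorial_ne_zero
  have h3 : (n.factorial : ℝ) ≠ 0 := Nat.cast_ne_zero.mpr n.factorial_ne_zero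
  field_simp
  rw [← key]; ring

/-- The auxiliary double-indexed family. -/
noncomputable def Fq (α x y : ℝ) (p : ℕ × ℕ) : ℝ :=
  (if Even (p.1 + p.2) then ((-1 : ℝ)) ^ ((p.1 + p.2) / 2) else 0)
    * α ^ ((p.1 + p.2).choose 2) * x ^ p.1 * y ^ p.2
    / ((p.1.factorial : ℝ) * p.2.factorial)

lemma Fq_summable {α : ℝ} (hα : 0 < α) (hα1 : α ≤ 1) (x y : ℝ) :
    Summable (Fq α x y) := by
  have hgsum : Summable fun p : ℕ × ℕ =>
      (|x| ^ p.1 / p.1.factorial) * (|y| ^ p.2 / p.2.factorial) :=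
    Summable.mul_of_nonneg (f := fun j : ℕ => |x| ^ j / j.factorial)
      (g := fun k : ℕ => |y| ^ k / k.factorial)
      (Real.summable_pow_div_factorial |x|)
      (Real.summable_pow_div_factorial |y|) (fun _ => by positivity) (fun _ => by positivity)
  refine Summable.of_norm_bounded hgsum ?_
  rintro ⟨j, k⟩
  have hσ : |if Even (j + k) then ((-1 : ℝ)) ^ ((j + k) / 2) else 0| ≤ 1 := by
    split <;> simp [abs_pow]
  calc ‖Fq α x y (j, k)‖
      = |if Even (j + k) then ((-1 : ℝ)) ^ ((j + k) / 2) else 0| *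
          α ^ ((j + k).choose 2) * |x| ^ j * |y| ^ k /
          ((j.factorial : ℝ) * k.factorial) := by
        simp only [Fq, Real.norm_eq_abs, abs_div, abs_mul, abs_pow, abs_of_pos hα,
          Nat.abs_cast]
    _ ≤ 1 * 1 * |x| ^ j * |y| ^ k / ((j.factorial : ℝ) * k.factorial) := by
        gcongr
        exact pow_le_one₀ hα.le hα1
    _ = (|x| ^ j / j.factorial) * (|y| ^ k / k.factorial) := by
        rw [one_mul, one_mul, div_mul_div_comm]

set_option maxHeartbeats 1000000 in
/-- The addition formula for the cosine-like function:
`C_α(x+y) = Σ α^{n(2n-1)} (-1)ⁿ x^{2n}/(2n)! C_α(α^{2n} y)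
          − Σ α^{n(2n+1)} (-1)ⁿ x^{2n+1}/(2n+1)! S_α(α^{2n+1} y)`. -/
theorem Ca_add (α : ℝ) (hα : 0 < α) (hα1 : α ≤ 1) (x y : ℝ) :
    Ca α (x + y)
      = (∑' n : ℕ, α ^ (n * (2 * n - 1)) * ((-1 : ℝ) ^ n * x ^ (2 * n) / ((2 * n).factorial : ℝ))
            * Ca α (α ^ (2 * n) * y))
        - ∑' n : ℕ, α ^ (n * (2 * n + 1)) * ((-1 : ℝ) ^ n * x ^ (2 * n + 1) / ((2 * n + 1).factorial : ℝ))
            * Sa α (α ^ (2 * n + 1) * y) := by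
  have hsum : Summable (Fq α x y) := Fq_summable hα hα1 x y
  -- antidiagonal grouping
  have hFσ : Summable (Fq α x y ∘ Finset.HasAntidiagonal.sigmaAntidiagonalEquivProd) :=
    (Equiv.summable_iff _).2 hsum
  have hfiber : ∀ n : ℕ, HasSum (fun kl : Finset.HasAntidiagonal.antidiagonal n => Fq α x y kl)
      (∑ kl ∈ Finset.HasAntidiagonal.antidiagonal n, Fq α x y kl) := by
    intro n
    have := hasSum_fintype (fun kl : Finset.HasAntidiagonal.antidiagonal n => Fq α x y (kl : ℕ × ℕ))
    rwa [Finset.sum_coe_sort] at this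
  have hhsum : HasSum (fun n => ∑ kl ∈ Finset.HasAntidiagonal.antidiagonal n, Fq α x y kl)
      (∑' p : ℕ × ℕ, Fq α x y p) := by
    have h1 : HasSum (Fq α x y ∘ Finset.HasAntidiagonal.sigmaAntidiagonalEquivProd)
        (∑' p : ℕ × ℕ, Fq α x y p) := by
      have h2 := hFσ.hasSum
      rwa [show ∑' σ, (Fq α x y ∘ Finset.HasAntidiagonal.sigmaAntidiagonalEquivProd) σ
          = ∑' p : ℕ × ℕ, Fq α x y p from
        Finset.HasAntidiagonal.sigmaAntidiagonalEquivProd.tsum_eq (Fq α x y)] at h2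
    exact h1.sigma hfiber
  have hodd0 : ∀ m : ℕ, ∑ kl ∈ Finset.HasAntidiagonal.antidiagonal (2 * m + 1), Fq α x y kl = 0 := by
    intro m
    refine Finset.sum_eq_zero fun kl hkl => ?_
    have hk : kl.1 + kl.2 = 2 * m + 1 := Finset.HasAntidiagonal.mem_antidiagonal.mp hkl
    simp only [Fq, hk]
    rw [if_neg (by rw [Nat.even_iff]; omega)]
    simp
  have heven : ∀ m : ℕ, ∑ kl ∈ Finset.HasAntidiagonal.antidiagonal (2 * m), Fq α x y kl =
      (-1 : ℝ) ^ m * α ^ (m * (2 * m - 1)) * (x + y) ^ (2 * m) / ((2 * m).factorial : ℝ) := by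
    intro m
    have step : ∑ kl ∈ Finset.HasAntidiagonal.antidiagonal (2 * m), Fq α x y kl
        = ∑ kl ∈ Finset.HasAntidiagonal.antidiagonal (2 * m),
        (-1 : ℝ) ^ m * α ^ (m * (2 * m - 1)) *
          (x ^ kl.1 * y ^ kl.2 / ((kl.1.factorial : ℝ) * kl.2.factorial)) := by
      refine Finset.sum_congr rfl fun kl hkl => ?_
      have hk : kl.1 + kl.2 = 2 * m := Finset.HasAntidiagonal.mem_antidiagonal.mp hkl
      simp only [Fq, hk]
      rw [if_pos (even_two_mul m), Nat.mul_div_cancel_left _ (by norm_num : 0 < 2), ch_even]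
      ring
    rw [step, ← Finset.mul_sum, sum_antidiag_pow]
    ring
  have hhe : Summable fun m => ∑ kl ∈ Finset.HasAntidiagonal.antidiagonal (2 * m), Fq α x y kl :=
    hhsum.summable.comp_injective (i := fun m => 2 * m) (fun a b hab => by dsimp only at hab; omega)
  have hho : Summable fun m => ∑ kl ∈ Finset.HasAntidiagonal.antidiagonal (2 * m + 1), Fq α x y kl :=
    hhsum.summable.comp_injective (i := fun m => 2 * m + 1) (fun a b hab => by dsimp only at hab; omega)
  have hLeft : Ca α (x + y) = ∑' p : ℕ × ℕ, Fq α x y p := by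
    have h2 : (∑' m, ∑ kl ∈ Finset.HasAntidiagonal.antidiagonal (2 * m), Fq α x y kl)
        + ∑' m, ∑ kl ∈ Finset.HasAntidiagonal.antidiagonal (2 * m + 1), Fq α x y kl
        = ∑' n, ∑ kl ∈ Finset.HasAntidiagonal.antidiagonal n, Fq α x y kl :=
      tsum_even_add_odd (f := fun n => ∑ kl ∈ Finset.HasAntidiagonal.antidiagonal n, Fq α x y kl) hhe hho
    have h3 : (∑' m, ∑ kl ∈ Finset.HasAntidiagonal.antidiagonal (2 * m + 1), Fq α x y kl) = 0 := by
      simp [hodd0]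
    have h4 : Ca α (x + y) = ∑' m, ∑ kl ∈ Finset.HasAntidiagonal.antidiagonal (2 * m), Fq α x y kl :=
      tsum_congr fun m => (heven m).symm
    rw [h4, ← hhsum.tsum_eq, ← h2, h3, add_zero]
  -- product side
  have hGfiber : ∀ j : ℕ, HasSum (fun k => Fq α x y (j, k)) (∑' k, Fq α x y (j, k)) :=
    fun j => (hsum.prod_factor j).hasSum
  have hG : HasSum (fun j => ∑' k, Fq α x y (j, k)) (∑' p : ℕ × ℕ, Fq α x y p) :=
    hsum.hasSum.prod_fiberwise hGfiber
  have hGe : Summable fun n => ∑' k, Fq α x y (2 * n, k) :=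
    hG.summable.comp_injective (i := fun m => 2 * m) (fun a b hab => by dsimp only at hab; omega)
  have hGo : Summable fun n => ∑' k, Fq α x y (2 * n + 1, k) :=
    hG.summable.comp_injective (i := fun m => 2 * m + 1) (fun a b hab => by dsimp only at hab; omega)
  have hGeven : ∀ n : ℕ, (∑' k, Fq α x y (2 * n, k)) =
      α ^ (n * (2 * n - 1)) * ((-1 : ℝ) ^ n * x ^ (2 * n) / ((2 * n).factorial : ℝ))
        * Ca α (α ^ (2 * n) * y) := by
    intro n
    have hsk : Summable fun k => Fq α x y (2 * n, k) := hsum.prod_factor _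
    have he : Summable fun m => Fq α x y (2 * n, 2 * m) :=
      hsk.comp_injective (i := fun m => 2 * m) (fun a b hab => by dsimp only at hab; omega)
    have ho : Summable fun m => Fq α x y (2 * n, 2 * m + 1) :=
      hsk.comp_injective (i := fun m => 2 * m + 1) (fun a b hab => by dsimp only at hab; omega)
    have hsplit : (∑' m, Fq α x y (2 * n, 2 * m)) + ∑' m, Fq α x y (2 * n, 2 * m + 1)
        = ∑' k, Fq α x y (2 * n, k) :=
      tsum_even_add_odd (f := fun k => Fq α x y (2 * n, k)) he ho
    have hzero : (∑' m, Fq α x y (2 * n, 2 * m + 1)) = 0 := by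
      have hz : ∀ m : ℕ, Fq α x y (2 * n, 2 * m + 1) = 0 := by
        intro m
        simp only [Fq]
        rw [if_neg (by rw [Nat.even_iff]; omega)]
        simp
      simp [hz]
    have hterm : ∀ m : ℕ, Fq α x y (2 * n, 2 * m) =
        α ^ (n * (2 * n - 1)) * ((-1 : ℝ) ^ n * x ^ (2 * n) / ((2 * n).factorial : ℝ)) *
          ((-1 : ℝ) ^ m * α ^ (m * (2 * m - 1)) * (α ^ (2 * n) * y) ^ (2 * m)
            / ((2 * m).factorial : ℝ)) := by
      intro m
      have hev : Even (2 * n + 2 * m) := ⟨n + m, by ring⟩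
      have hdiv : (2 * n + 2 * m) / 2 = n + m := by omega
      have hexp : (2 * n + 2 * m).choose 2
          = n * (2 * n - 1) + (m * (2 * m - 1) + 2 * n * (2 * m)) := by
        rw [ch_add, ch_even, ch_even]; ring
      simp only [Fq]
      rw [if_pos hev, hdiv, hexp, pow_add α, pow_add α, pow_add (-1 : ℝ) n m,
        mul_pow (α ^ (2 * n)) y, ← pow_mul α (2 * n) (2 * m)]
      ring
    calc (∑' k, Fq α x y (2 * n, k)) = ∑' m, Fq α x y (2 * n, 2 * m) := by
          rw [← hsplit, hzero, add_zero]
      _ = ∑' m, α ^ (n * (2 * n - 1)) * ((-1 : ℝ) ^ n * x ^ (2 * n) / ((2 * n).factorial : ℝ)) *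
            ((-1 : ℝ) ^ m * α ^ (m * (2 * m - 1)) * (α ^ (2 * n) * y) ^ (2 * m)
              / ((2 * m).factorial : ℝ)) := tsum_congr hterm
      _ = _ := by rw [Ca]; exact tsum_mul_left
  have hGodd : ∀ n : ℕ, (∑' k, Fq α x y (2 * n + 1, k)) =
      -(α ^ (n * (2 * n + 1)) * ((-1 : ℝ) ^ n * x ^ (2 * n + 1) / ((2 * n + 1).factorial : ℝ))
        * Sa α (α ^ (2 * n + 1) * y)) := by
    intro n
    have hsk : Summable fun k => Fq α x y (2 * n + 1, k) := hsum.prod_factor _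
    have he : Summable fun m => Fq α x y (2 * n + 1, 2 * m) :=
      hsk.comp_injective (i := fun m => 2 * m) (fun a b hab => by dsimp only at hab; omega)
    have ho : Summable fun m => Fq α x y (2 * n + 1, 2 * m + 1) :=
      hsk.comp_injective (i := fun m => 2 * m + 1) (fun a b hab => by dsimp only at hab; omega)
    have hsplit : (∑' m, Fq α x y (2 * n + 1, 2 * m)) + ∑' m, Fq α x y (2 * n + 1, 2 * m + 1)
        = ∑' k, Fq α x y (2 * n + 1, k) :=
      tsum_even_add_odd (f := fun k => Fq α x y (2 * n + 1, k)) he ho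
    have hzero : (∑' m, Fq α x y (2 * n + 1, 2 * m)) = 0 := by
      have hz : ∀ m : ℕ, Fq α x y (2 * n + 1, 2 * m) = 0 := by
        intro m
        simp only [Fq]
        rw [if_neg (by rw [Nat.even_iff]; omega)]
        simp
      simp [hz]
    have hterm : ∀ m : ℕ, Fq α x y (2 * n + 1, 2 * m + 1) =
        -(α ^ (n * (2 * n + 1)) * ((-1 : ℝ) ^ n * x ^ (2 * n + 1) / ((2 * n + 1).factorial : ℝ)) *
          ((-1 : ℝ) ^ m * α ^ (m * (2 * m + 1)) * (α ^ (2 * n + 1) * y) ^ (2 * m + 1)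
            / ((2 * m + 1).factorial : ℝ))) := by
      intro m
      have hev : Even (2 * n + 1 + (2 * m + 1)) := ⟨n + m + 1, by ring⟩
      have hdiv : (2 * n + 1 + (2 * m + 1)) / 2 = n + m + 1 := by omega
      have hexp : (2 * n + 1 + (2 * m + 1)).choose 2
          = n * (2 * n + 1) + (m * (2 * m + 1) + (2 * n + 1) * (2 * m + 1)) := by
        rw [ch_add, ch_odd, ch_odd]; ring
      simp only [Fq]
      rw [if_pos hev, hdiv, hexp, pow_add α, pow_add α,
        show ((-1 : ℝ)) ^ (n + m + 1) = -((-1 : ℝ) ^ n * (-1 : ℝ) ^ m) by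
          rw [pow_add, pow_add]; ring,
        mul_pow (α ^ (2 * n + 1)) y, ← pow_mul α (2 * n + 1) (2 * m + 1)]
      ring
    calc (∑' k, Fq α x y (2 * n + 1, k)) = ∑' m, Fq α x y (2 * n + 1, 2 * m + 1) := by
          rw [← hsplit, hzero, zero_add]
      _ = ∑' m, -(α ^ (n * (2 * n + 1)) *
            ((-1 : ℝ) ^ n * x ^ (2 * n + 1) / ((2 * n + 1).factorial : ℝ)) *
            ((-1 : ℝ) ^ m * α ^ (m * (2 * m + 1)) * (α ^ (2 * n + 1) * y) ^ (2 * m + 1)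
              / ((2 * m + 1).factorial : ℝ))) := tsum_congr hterm
      _ = _ := by rw [Sa, tsum_neg, tsum_mul_left]
  calc Ca α (x + y) = ∑' p : ℕ × ℕ, Fq α x y p := hLeft
    _ = ∑' j, ∑' k, Fq α x y (j, k) := hG.tsum_eq.symm
    _ = (∑' n, ∑' k, Fq α x y (2 * n, k)) + ∑' n, ∑' k, Fq α x y (2 * n + 1, k) :=
      (tsum_even_add_odd (f := fun j => ∑' k, Fq α x y (j, k)) hGe hGo).symm
    _ = (∑' n : ℕ, α ^ (n * (2 * n - 1)) *
            ((-1 : ℝ) ^ n * x ^ (2 * n) / ((2 * n).factorial : ℝ)) * Ca α (α ^ (2 * n) * y))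
        + -(∑' n : ℕ, α ^ (n * (2 * n + 1)) *
            ((-1 : ℝ) ^ n * x ^ (2 * n + 1) / ((2 * n + 1).factorial : ℝ))
              * Sa α (α ^ (2 * n + 1) * y)) := by
      rw [tsum_congr hGeven, tsum_congr hGodd, tsum_neg]
    _ = _ := (sub_eq_add_neg _ _).symm
end

section
/- For 0 < α ≤ 1, the cosine-like function C_α has at least one positive real zero; more generally, every nontrivial real solution of y''(x) = -α y(α² x) has a positive zero. -/
open Set


noncomputable def caTerm (α x : ℝ) (n : ℕ) : ℝ :=
  (-1 : ℝ) ^ n * α ^ (n * (2 * n - 1)) * x ^ (2 * n) / ((2 * n).factorial : ℝ)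

lemma caTerm_abs_le {α x b : ℝ} (hα0 : 0 ≤ α) (hα1 : α ≤ 1) (hx : |x| ≤ b) (n : ℕ) :
    |caTerm α x n| ≤ (b ^ 2) ^ n / n.factorial := by
  have hb : 0 ≤ b := le_trans (abs_nonneg x) hx
  have h1 : |caTerm α x n| = α ^ (n * (2 * n - 1)) * |x| ^ (2 * n) / ((2 * n).factorial : ℝ) := by
    unfold caTerm
    rw [abs_div, abs_mul, abs_mul, abs_pow, abs_pow, abs_pow, abs_neg, abs_one, one_pow, one_mul,
      abs_of_nonneg hα0, Nat.abs_cast]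
  rw [h1]
  have h2 : α ^ (n * (2 * n - 1)) ≤ 1 := pow_le_one₀ hα0 hα1
  have h3 : |x| ^ (2 * n) ≤ b ^ (2 * n) := pow_le_pow_left₀ (abs_nonneg x) hx _
  have h4 : (n.factorial : ℝ) ≤ ((2 * n).factorial : ℝ) := by
    exact_mod_cast Nat.factorial_le (by omega)
  have h5 : (0 : ℝ) < n.factorial := by exact_mod_cast n.factorial_pos
  have h6 : (0 : ℝ) < (2 * n).factorial := by exact_mod_cast (2 * n).factorial_pos
  have h7 : (b ^ 2) ^ n = b ^ (2 * n) := by rw [← pow_mul, mul_comm]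
  rw [h7]
  have : α ^ (n * (2 * n - 1)) * |x| ^ (2 * n) ≤ b ^ (2 * n) := by
    nlinarith [pow_nonneg (abs_nonneg x) (2 * n), pow_nonneg hb (2 * n),
      pow_nonneg hα0 (n * (2 * n - 1))]
  calc α ^ (n * (2 * n - 1)) * |x| ^ (2 * n) / ((2 * n).factorial : ℝ)
      ≤ b ^ (2 * n) / ((2 * n).factorial : ℝ) := by gcongr
    _ ≤ b ^ (2 * n) / (n.factorial : ℝ) := by
        apply div_le_div_of_nonneg_left (pow_nonneg hb _) h5 h4

lemma caTerm_summable {α x b : ℝ} (hα0 : 0 ≤ α) (hα1 : α ≤ 1) (hx : |x| ≤ b) :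
    Summable (caTerm α x) := by
  apply Summable.of_norm_bounded (Real.summable_pow_div_factorial (b ^ 2))
  intro n
  simpa using caTerm_abs_le hα0 hα1 hx n

lemma Ca_eq_s9 (α x : ℝ) : (∑' n : ℕ, (-1 : ℝ) ^ n * α ^ (n * (2 * n - 1)) * x ^ (2 * n)
    / ((2 * n).factorial : ℝ)) = ∑' n, caTerm α x n := rfl

lemma Ca_zero (α : ℝ) : (∑' n, caTerm α 0 n) = 1 := by
  rw [tsum_eq_single 0]
  · simp [caTerm]
  · intro n hn
    simp [caTerm, zero_pow (by omega : 2 * n ≠ 0)]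



-- nat factorial bound
lemma fact_bound : ∀ n : ℕ, 24 * 30 ^ n ≤ (2 * n + 4).factorial := by
  intro n
  induction n with
  | zero => decide
  | succ n ih =>
    have h : (2 * (n + 1) + 4).factorial = (2 * n + 6) * ((2 * n + 5) * (2 * n + 4).factorial) := by
      have : 2 * (n + 1) + 4 = (2 * n + 5) + 1 := by omega
      rw [this, Nat.factorial_succ, Nat.factorial_succ]
    calc 24 * 30 ^ (n + 1) = 30 * (24 * 30 ^ n) := by ring
      _ ≤ 30 * (2 * n + 4).factorial := by exact Nat.mul_le_mul_left _ ih
      _ ≤ (2 * n + 6) * ((2 * n + 5) * (2 * n + 4).factorial) := by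
          rw [← mul_assoc]
          exact Nat.mul_le_mul_right _ (by nlinarith)
      _ = (2 * (n + 1) + 4).factorial := h.symm

-- tail term bound at x0 with x0^2 = 3/α
lemma caTerm_tail_bound {α : ℝ} (hα : 0 < α) (hα1 : α ≤ 1) {x0 : ℝ} (hx0 : x0 ^ 2 = 3 / α)
    (n : ℕ) : |caTerm α x0 (n + 2)| ≤ (3 / 8) * (1 / 10) ^ n := by
  set m := n + 2 with hm
  have hx2n : x0 ^ (2 * m) = (3 / α) ^ m := by rw [pow_mul, hx0]
  have hfac : (0 : ℝ) < (2 * m).factorial := by exact_mod_cast (2 * m).factorial_pos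
  have habs : |caTerm α x0 m| = α ^ (m * (2 * m - 1)) * (3 / α) ^ m / ((2 * m).factorial : ℝ) := by
    unfold caTerm
    rw [abs_div, abs_mul, abs_mul, abs_pow, abs_pow, abs_neg, abs_one, one_pow, one_mul,
      abs_of_nonneg hα.le, Nat.abs_cast, abs_of_nonneg ((even_two_mul m).pow_nonneg x0), hx2n]
  rw [habs]
  -- α ^ (m(2m-1)) * (3/α)^m = 3^m * α^(m(2m-1) - m) ≤ 3^m
  have hexp : m ≤ m * (2 * m - 1) := by
    have : 1 ≤ 2 * m - 1 := by omega
    calc m = m * 1 := (mul_one m).symm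
      _ ≤ m * (2 * m - 1) := Nat.mul_le_mul_left m this
  have key : α ^ (m * (2 * m - 1)) * (3 / α) ^ m ≤ 3 ^ m := by
    rw [div_pow, ← Nat.sub_add_cancel hexp, pow_add, mul_comm (α ^ _) (α ^ m),
      mul_assoc, mul_comm, mul_assoc]
    have h1 : (3:ℝ) ^ m / α ^ m * α ^ m = 3 ^ m := div_mul_cancel₀ _ (by positivity)
    calc α ^ (m * (2 * m - 1) - m) * (3 ^ m / α ^ m * α ^ m)
        = α ^ (m * (2 * m - 1) - m) * 3 ^ m := by rw [h1]
      _ ≤ 1 * 3 ^ m := by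
          apply mul_le_mul_of_nonneg_right (pow_le_one₀ hα.le hα1) (by positivity)
      _ = 3 ^ m := one_mul _
  have hnat : (24 * 30 ^ n : ℝ) ≤ ((2 * m).factorial : ℝ) := by
    have := fact_bound n
    have h2 : 2 * m = 2 * n + 4 := by omega
    rw [h2]
    exact_mod_cast this
  have h3m : (3:ℝ) ^ m = 9 * 3 ^ n := by rw [hm, pow_add]; ring
  rw [div_le_iff₀ hfac]
  calc α ^ (m * (2 * m - 1)) * (3 / α) ^ m ≤ 3 ^ m := key
    _ = 9 * 3 ^ n := h3m
    _ ≤ 3 / 8 * (1 / 10) ^ n * (24 * 30 ^ n) := by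
        have : (3:ℝ) / 8 * (1/10) ^ n * (24 * 30 ^ n) = 9 * ((1/10 * 30 : ℝ)) ^ n := by
          rw [mul_pow]; ring
        rw [this]
        norm_num
    _ ≤ 3 / 8 * (1 / 10) ^ n * ((2 * m).factorial : ℝ) := by
        apply mul_le_mul_of_nonneg_left hnat (by positivity)

lemma ySignPos {y : ℝ → ℝ} (hyc : Continuous y) (hnz : ∀ x : ℝ, 0 < x → y x ≠ 0)
    (h1 : 0 < y 1) : ∀ x : ℝ, 0 < x → 0 < y x := by
  intro x hx
  rcases (hnz x hx).lt_or_gt with hlt | hgt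
  · exfalso
    have h0 : (0 : ℝ) ∈ uIcc (y x) (y 1) := by
      rw [mem_uIcc]; left; exact ⟨hlt.le, h1.le⟩
    obtain ⟨z, hz, hz0⟩ := intermediate_value_uIcc hyc.continuousOn h0
    have hzpos : 0 < z := lt_of_lt_of_le (lt_min hx one_pos) hz.1
    exact hnz z hzpos hz0
  · exact hgt

lemma core (α : ℝ) (hα : 0 < α) (y y' : ℝ → ℝ)
    (hy : ∀ x : ℝ, HasDerivAt y (y' x) x)
    (hy' : ∀ x : ℝ, HasDerivAt y' (-α * y (α ^ 2 * x)) x)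
    (hpos : ∀ x : ℝ, 0 < x → 0 < y x) : False := by
  have hα2 : (0:ℝ) < α ^ 2 := by positivity
  have hyc : Continuous y := continuous_iff_continuousAt.2 fun x => (hy x).continuousAt
  have hy'c : Continuous y' := continuous_iff_continuousAt.2 fun x => (hy' x).continuousAt
  have hyd : Differentiable ℝ y := fun x => (hy x).differentiableAt
  have hanti : StrictAntiOn y' (Ici 0) := by
    apply strictAntiOn_of_deriv_neg (convex_Ici 0) hy'c.continuousOn
    intro x hx
    rw [interior_Ici] at hx
    rw [(hy' x).deriv]
    have h := hpos _ (mul_pos hα2 hx)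
    nlinarith
  have hy'nonneg : ∀ b : ℝ, 0 < b → 0 ≤ y' b := by
    intro b hb
    by_contra hneg; push_neg at hneg
    have hgd : ∀ x : ℝ, HasDerivAt (fun t => y t - y' b * t) (y' x - y' b) x := by
      intro x
      have := (hy x).sub ((hasDerivAt_id x).const_mul (y' b))
      simp only [mul_one] at this
      exact this
    have hganti : StrictAntiOn (fun t => y t - y' b * t) (Ici b) := by
      apply strictAntiOn_of_deriv_neg (convex_Ici b)
        (Continuous.continuousOn (by continuity))
      intro x hx
      rw [interior_Ici] at hx
      rw [(hgd x).deriv]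
      have : y' x < y' b := hanti hb.le (le_of_lt (hb.trans hx)) hx
      linarith
    set c := y b with hcdef
    set d := -y' b with hddef
    have hd : 0 < d := neg_pos.2 hneg
    have hc : 0 < c := hpos b hb
    set x1 := b + c / d + 1 with hx1def
    have hx1 : b < x1 := by
      have := div_pos hc hd
      simp only [hx1def]; linarith
    have h2 : y x1 - y' b * x1 < y b - y' b * b :=
      hganti self_mem_Ici (mem_Ici.2 hx1.le) hx1
    have h3 : y' b * (x1 - b) = -c - d := by
      have hx1b : x1 - b = c / d + 1 := by simp only [hx1def]; ring
      rw [hx1b]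
      have : y' b = -d := by simp [hddef]
      rw [this]
      field_simp
      ring
    have h4 : 0 < y x1 := hpos x1 (hb.trans hx1)
    nlinarith
  have hmono : MonotoneOn y (Ioi 0) := by
    apply monotoneOn_of_deriv_nonneg (convex_Ioi 0) hyc.continuousOn
      (fun x _ => (hyd x).differentiableWithinAt)
    intro x hx
    rw [interior_Ioi] at hx
    rw [(hy x).deriv]
    exact hy'nonneg x hx
  set c := y (α ^ 2) with hcdef
  have hcpos : 0 < c := hpos _ hα2
  have hhd : ∀ x : ℝ, HasDerivAt (fun t => y' t + α * c * (t - 1))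
      (-α * y (α ^ 2 * x) + α * c) x := by
    intro x
    have := (hy' x).add (((hasDerivAt_id x).sub_const 1).const_mul (α * c))
    simp only [mul_one] at this
    exact this
  have hhanti : AntitoneOn (fun t => y' t + α * c * (t - 1)) (Ici 1) := by
    apply antitoneOn_of_deriv_nonpos (convex_Ici 1)
      (Continuous.continuousOn (by continuity))
    · intro x hx
      exact ((hy' x).add (((hasDerivAt_id x).sub_const 1).const_mul (α * c))).differentiableAt.differentiableWithinAt
    · intro x hx
      rw [interior_Ici] at hx
      rw [(hhd x).deriv]
      have hx0 : (0:ℝ) < x := lt_trans one_pos hx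
      have h1 : c ≤ y (α ^ 2 * x) := by
        apply hmono (mem_Ioi.2 hα2) (mem_Ioi.2 (mul_pos hα2 hx0))
        nlinarith [mul_pos hα2 (sub_pos.2 hx)]
      nlinarith [mul_le_mul_of_nonneg_left h1 hα.le]
  have h1nn : 0 ≤ y' 1 := hy'nonneg 1 one_pos
  set x2 := 1 + (y' 1 + 1) / (α * c) with hx2def
  have hacpos : 0 < α * c := mul_pos hα hcpos
  have hx2 : 1 < x2 := by
    have := div_pos (by linarith : (0:ℝ) < y' 1 + 1) hacpos
    simp only [hx2def]; linarith
  have h4 : y' x2 + α * c * (x2 - 1) ≤ y' 1 + α * c * (1 - 1) :=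
    hhanti self_mem_Ici (mem_Ici.2 hx2.le) hx2.le
  have h5 : α * c * (x2 - 1) = y' 1 + 1 := by
    have : x2 - 1 = (y' 1 + 1) / (α * c) := by simp only [hx2def]; ring
    rw [this]
    field_simp
  have h6 : 0 ≤ y' x2 := hy'nonneg x2 (lt_trans one_pos hx2)
  nlinarith

/-- For `0 < α ≤ 1`, `C_α` has a positive real zero; more generally, every
nontrivial real solution of `y''(x) = -α y(α²x)` has a positive zero. -/
theorem Ca_has_positive_zero (α : ℝ) (hα : 0 < α) (hα1 : α ≤ 1) :
    (∃ x : ℝ, 0 < x ∧ Ca α x = 0) ∧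
    ∀ (y y' : ℝ → ℝ),
      (∀ x : ℝ, HasDerivAt y (y' x) x) →
      (∀ x : ℝ, HasDerivAt y' (-α * y (α ^ 2 * x)) x) →
      y ≠ 0 →
      ∃ x : ℝ, 0 < x ∧ y x = 0 := by
  constructor
  · -- Part 1: Ca has a positive zero
    set x0 := Real.sqrt (3 / α) with hx0def
    have h3α : (0:ℝ) < 3 / α := by positivity
    have hx0sq : x0 ^ 2 = 3 / α := Real.sq_sqrt h3α.le
    have hx0pos : 0 < x0 := Real.sqrt_pos.2 h3α
    have hb : ∀ x ∈ Icc (0:ℝ) x0, |x| ≤ x0 := fun x hx => by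
      rw [abs_of_nonneg hx.1]; exact hx.2
    have hCaeq : Ca α = fun x => ∑' n, caTerm α x n := rfl
    have hcont : ContinuousOn (Ca α) (Icc 0 x0) := by
      rw [hCaeq]
      apply continuousOn_tsum (u := fun n => (x0 ^ 2) ^ n / n.factorial)
      · intro i
        apply Continuous.continuousOn
        unfold caTerm
        fun_prop
      · exact Real.summable_pow_div_factorial _
      · intro n x hx
        rw [Real.norm_eq_abs]
        exact caTerm_abs_le hα.le hα1 (hb x hx) n
    have hCa0 : Ca α 0 = 1 := Ca_zero α
    have hx0abs : |x0| ≤ x0 := (abs_of_nonneg hx0pos.le).le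
    have hsum : Summable (caTerm α x0) := caTerm_summable hα.le hα1 hx0abs
    have hsum1 : Summable (fun n => caTerm α x0 (n + 1)) := (summable_nat_add_iff 1).2 hsum
    have hsum2 : Summable (fun n => caTerm α x0 (n + 2)) := (summable_nat_add_iff 2).2 hsum
    have ht0 : caTerm α x0 0 = 1 := by simp [caTerm]
    have ht1 : caTerm α x0 1 = -(3/2) := by
      have h : caTerm α x0 1 = -(α * x0 ^ 2) / 2 := by
        unfold caTerm; norm_num
      rw [h, hx0sq]
      field_simp
    have hR : |∑' n, caTerm α x0 (n + 2)| ≤ 5/12 := by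
      have habs : Summable (fun n => ‖caTerm α x0 (n + 2)‖) := hsum2.abs
      calc |∑' n, caTerm α x0 (n + 2)| ≤ ∑' n, |caTerm α x0 (n + 2)| := by
            simpa using norm_tsum_le_tsum_norm habs
        _ ≤ ∑' n : ℕ, (3/8) * (1/10 : ℝ) ^ n := by
            apply Summable.tsum_le_tsum (fun n => caTerm_tail_bound hα hα1 hx0sq n)
            · simpa using habs
            · exact (summable_geometric_of_lt_one (by norm_num) (by norm_num)).mul_left _
        _ = 5/12 := by
            rw [tsum_mul_left, tsum_geometric_of_lt_one (by norm_num) (by norm_num)]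
            norm_num
    have hCax0 : Ca α x0 < 0 := by
      have hshift : (fun n => caTerm α x0 (n + 1 + 1)) = fun n => caTerm α x0 (n + 2) := by
        funext n; congr 1
      have hsplit : Ca α x0
          = caTerm α x0 0 + (caTerm α x0 (0 + 1) + ∑' n, caTerm α x0 (n + 2)) := by
        rw [show Ca α x0 = ∑' n, caTerm α x0 n from rfl, Summable.tsum_eq_zero_add hsum,
          Summable.tsum_eq_zero_add hsum1, hshift]
      rw [hsplit, ht0]
      norm_num [ht1]
      have := abs_le.1 hR
      linarith [this.2]
    obtain ⟨z, hz, hz0⟩ := intermediate_value_Icc' hx0pos.le hcont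
      (show (0:ℝ) ∈ Icc (Ca α x0) (Ca α 0) from ⟨hCax0.le, by rw [hCa0]; norm_num⟩)
    refine ⟨z, ?_, hz0⟩
    rcases eq_or_lt_of_le hz.1 with h | h
    · exfalso
      rw [← h, hCa0] at hz0
      norm_num at hz0
    · exact h
  · -- Part 2: ODE argument
    intro y y' hy hy' _
    by_contra hcon
    push_neg at hcon
    have hnz : ∀ x : ℝ, 0 < x → y x ≠ 0 := fun x hx => hcon x hx
    have hyc : Continuous y := continuous_iff_continuousAt.2 fun x => (hy x).continuousAt
    rcases lt_trichotomy (y 1) 0 with h1 | h1 | h1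
    · have hny : ∀ x : ℝ, HasDerivAt (fun t => -y t) (-y' x) x := fun x => (hy x).neg
      have hny' : ∀ x : ℝ, HasDerivAt (fun t => -y' t)
          (-α * (fun t => -y t) (α ^ 2 * x)) x := by
        intro x
        have := (hy' x).neg
        exact this.congr_deriv (by simp)
      apply core α hα _ _ hny hny'
      apply ySignPos hyc.neg (fun x hx => by simpa using hnz x hx)
      simpa using neg_pos.2 h1
    · exact hnz 1 one_pos h1
    · exact core α hα y y' hy hy' (ySignPos hyc hnz h1)
end

section
/- For 0 < α < 1, suppose k : [0,∞) → ℝ is differentiable with k'(t) ≤ 0 and k(t) > k₀ > 0 for all t. Then no solution y of y'(t) = -k(t) y(αt) with y(0) ≠ 0 can be eventually positive; in particular y has arbitrarily large positive zeros. -/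
lemma pantograph_not_eventually_pos (α k₀ : ℝ) (hα : 0 < α) (hα1 : α < 1)
    (k y : ℝ → ℝ) (hk₀ : 0 < k₀)
    (hkdiff : ∀ t : ℝ, 0 ≤ t → DifferentiableAt ℝ k t)
    (hk : ∀ t : ℝ, 0 ≤ t → k₀ < k t)
    (hy : ∀ t : ℝ, 0 ≤ t → HasDerivAt y (-(k t * y (α * t))) t) :
    ∀ S : ℝ, ∃ t : ℝ, S ≤ t ∧ y t ≤ 0 := by
  intro S
  by_contra hcon
  push_neg at hcon
  set T : ℝ := max S 0 with hTdef
  have hT0 : (0:ℝ) ≤ T := le_max_right _ _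
  have hpos : ∀ t, T ≤ t → 0 < y t := fun t ht =>
    hcon t (le_trans (le_max_left _ _) ht)
  have hTα0 : (0:ℝ) ≤ T / α := div_nonneg hT0 hα.le
  -- y is antitone on [T/α, ∞)
  have hanti : AntitoneOn y (Set.Ici (T / α)) := by
    apply antitoneOn_of_deriv_nonpos (convex_Ici _)
    · intro x hx
      exact ((hy x (le_trans hTα0 hx)).continuousAt).continuousWithinAt
    · intro x hx
      rw [interior_Ici] at hx
      exact ((hy x (le_trans hTα0 (le_of_lt hx))).differentiableAt).differentiableWithinAt
    · intro x hx
      rw [interior_Ici] at hx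
      have hx0 : (0:ℝ) ≤ x := le_trans hTα0 hx.le
      rw [(hy x hx0).deriv]
      have hyx : 0 < y (α * x) := by
        apply hpos
        calc T = α * (T / α) := by field_simp
        _ ≤ α * x := by nlinarith [(Set.mem_Ioi.mp hx).le]
      have hkx : 0 < k x := lt_trans hk₀ (hk x hx0)
      nlinarith
  set t : ℝ := max (T / α ^ 3) (2 / (k₀ * (1 - α))) with htdef
  have h1α : 0 < 1 - α := by linarith
  have hk1α : 0 < k₀ * (1 - α) := by positivity
  have ht1 : T / α ^ 3 ≤ t := le_max_left _ _
  have ht2 : 2 / (k₀ * (1 - α)) ≤ t := le_max_right _ _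
  have ht0 : (0:ℝ) ≤ t := le_trans (by positivity) ht1
  have hα3 : α ^ 3 * t ≥ T := by
    rw [ge_iff_le, ← div_le_iff₀' (by positivity)] ; exact ht1
  have hkt : 2 ≤ k₀ * (1 - α) * t := by
    rw [div_le_iff₀ hk1α] at ht2 ; linarith
  have hαtt : α * t ≤ t := by nlinarith
  -- membership facts
  have hmem : ∀ s ∈ Set.Icc (α * t) t, T / α ≤ α * s := by
    intro s hs
    have := hs.1
    have hα2t : T / α ≤ α * (α * t) := by
      rw [div_le_iff₀ hα]
      nlinarith
    nlinarith
  have hαtmem : T / α ≤ α * t := by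
    have := hmem (α * t) ⟨le_refl _, hαtt⟩
    have h2 : T / α ≤ α * (α * t) := this
    nlinarith [div_nonneg hT0 hα.le]
  have hαtT : T ≤ α * t := by
    have := hαtmem
    rw [div_le_iff₀ hα] at this
    nlinarith
  have hyαt : 0 < y (α * t) := hpos _ hαtT
  -- integrability
  have hcont : ContinuousOn (fun s => -(k s * y (α * s))) (Set.uIcc (α * t) t) := by
    rw [Set.uIcc_of_le hαtt]
    intro s hs
    have hs0 : (0:ℝ) ≤ s := le_trans (by positivity) hs.1
    have hαs0 : (0:ℝ) ≤ α * s := by positivity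
    exact (((hkdiff s hs0).continuousAt.mul
      (((hy (α * s) hαs0).continuousAt).comp
        (continuousAt_const.mul continuousAt_id))).neg).continuousWithinAt
  have hintg : IntervalIntegrable (fun s => -(k s * y (α * s))) MeasureTheory.volume (α * t) t :=
    hcont.intervalIntegrable
  have hderivAll : ∀ s ∈ Set.uIcc (α * t) t, HasDerivAt y (-(k s * y (α * s))) s := by
    rw [Set.uIcc_of_le hαtt]
    intro s hs
    exact hy s (le_trans (by positivity) hs.1)
  have hint : ∫ s in (α * t)..t, -(k s * y (α * s)) = y t - y (α * t) :=
    intervalIntegral.integral_eq_sub_of_hasDerivAt hderivAll hintg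
  -- pointwise bound
  have hbound : ∀ s ∈ Set.Icc (α * t) t, -(k s * y (α * s)) ≤ -(k₀ * y (α * t)) := by
    intro s hs
    have hs0 : (0:ℝ) ≤ s := le_trans (by positivity) hs.1
    have hmem1 : α * s ∈ Set.Ici (T / α) := hmem s hs
    have hmem2 : α * t ∈ Set.Ici (T / α) := hαtmem
    have hle : α * s ≤ α * t := by nlinarith [hs.2]
    have hyy : y (α * t) ≤ y (α * s) := hanti hmem1 hmem2 hle
    have hks : k₀ ≤ k s := (hk s hs0).le
    nlinarith
  have hmono : (∫ s in (α * t)..t, -(k s * y (α * s))) ≤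
      ∫ _ in (α * t)..t, -(k₀ * y (α * t)) := by
    apply intervalIntegral.integral_mono_on hαtt hintg intervalIntegrable_const hbound
  rw [hint, intervalIntegral.integral_const, smul_eq_mul] at hmono
  have hyt : 0 < y t := hpos t (by nlinarith)
  nlinarith [hmono, hkt, hyαt, hyt]

/-- For `0 < α < 1`, if `k` is differentiable on `[0,∞)` with `k' ≤ 0` and
`k > k₀ > 0` there, then no solution `y` of `y'(t) = -k(t) y(αt)` with
`y(0) ≠ 0` is eventually positive; in particular, `y` has arbitrarily large
positive zeros. -/
theorem variable_coefficient_zeros (α k₀ : ℝ) (hα : 0 < α) (hα1 : α < 1)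
    (k y : ℝ → ℝ)
    (hk₀ : 0 < k₀)
    (hkdiff : ∀ t : ℝ, 0 ≤ t → DifferentiableAt ℝ k t)
    (hk' : ∀ t : ℝ, 0 ≤ t → deriv k t ≤ 0)
    (hk : ∀ t : ℝ, 0 ≤ t → k₀ < k t)
    (hy : ∀ t : ℝ, 0 ≤ t → HasDerivAt y (-(k t * y (α * t))) t)
    (hy0 : y 0 ≠ 0) :
    (¬ ∃ T : ℝ, ∀ t : ℝ, T ≤ t → 0 < y t) ∧
    (∀ T : ℝ, ∃ t : ℝ, T < t ∧ y t = 0) := by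
  have haux := pantograph_not_eventually_pos α k₀ hα hα1 k y hk₀ hkdiff hk hy
  have hyneg : ∀ t : ℝ, 0 ≤ t → HasDerivAt (fun s => -y s)
      (-(k t * (fun s => -y s) (α * t))) t := by
    intro t ht
    have := (hy t ht).neg
    exact this.congr_deriv (by simp)
  have hauxneg := pantograph_not_eventually_pos α k₀ hα hα1 k (fun s => -y s) hk₀ hkdiff hk hyneg
  constructor
  · rintro ⟨T, hT⟩
    obtain ⟨t, ht, hle⟩ := haux T
    exact absurd (hT t ht) (not_lt.mpr hle)
  · intro T
    obtain ⟨t₁, ht₁, h1⟩ := haux (max T 0 + 1)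
    have ht₁T : T < t₁ := lt_of_lt_of_le (lt_of_le_of_lt (le_max_left T 0) (by linarith)) ht₁
    have ht₁0 : (0:ℝ) ≤ t₁ := le_trans (by positivity : (0:ℝ) ≤ max T 0 + 1) ht₁
    rcases eq_or_lt_of_le h1 with heq | hlt
    · exact ⟨t₁, ht₁T, heq⟩
    obtain ⟨t₂, ht₂, h2⟩ := hauxneg t₁
    simp only [neg_nonpos] at h2
    have hcont : ContinuousOn y (Set.Icc t₁ t₂) := by
      intro s hs
      exact ((hy s (le_trans ht₁0 hs.1)).continuousAt).continuousWithinAt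
    have h0mem : (0:ℝ) ∈ Set.Icc (y t₁) (y t₂) := ⟨hlt.le, h2⟩
    obtain ⟨c, hc, hc0⟩ := intermediate_value_Icc ht₂ hcont h0mem
    exact ⟨c, lt_of_lt_of_le ht₁T hc.1, hc0⟩
end

section
/- Let p, q, c₁, c₂ be constants with Δ = p² − 4αq ≠ 0, and let β₁,β₂ = (−p ± √Δ)/(2α). Then y(x) = a₁ E_α(β₁ x) + a₂ E_α(β₂ x), with a₁ = (c₁β₂ − c₂)/(β₂−β₁) and a₂ = (c₁β₁ − c₂)/(β₁−β₂), solves y''(x) + p y'(αx) + q y(α²x) = 0 with y(0)=c₁, y'(0)=c₂. -/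
noncomputable def Ec (α : ℝ) (z : ℂ) : ℂ :=
  ∑' n : ℕ, (α : ℂ) ^ (n * (n - 1) / 2) * z ^ n / (n.factorial : ℂ)

lemma exp_shift (n : ℕ) : (n + 1) * ((n + 1) - 1) / 2 = n * (n - 1) / 2 + n := by
  cases n with
  | zero => rfl
  | succ m =>
    show (m + 2) * (m + 1) / 2 = (m + 1) * m / 2 + (m + 1)
    rw [show (m + 2) * (m + 1) = (m + 1) * m + 2 * (m + 1) by ring,
      Nat.add_mul_div_left _ _ (by norm_num : (0:ℕ) < 2)]

lemma Ec_zero (α : ℝ) : Ec α 0 = 1 := by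
  unfold Ec
  rw [tsum_eq_single 0]
  · simp
  · intro n hn; simp [zero_pow hn]

lemma Ec_hasDerivAt (α : ℝ) (hα0 : 0 < α) (hα1 : α < 1) (z : ℂ) :
    HasDerivAt (Ec α) (Ec α ((α : ℂ) * z)) z := by
  set R : ℝ := ‖z‖ + 1 with hRdef
  have hR1 : 1 ≤ R := by have := norm_nonneg z; rw [hRdef]; linarith
  have hR0 : 0 < R := by linarith
  have hzR : z ∈ Metric.ball (0 : ℂ) R := by
    rw [mem_ball_zero_iff, hRdef]; linarith
  set f : ℕ → ℂ → ℂ := fun n w => (α : ℂ) ^ (n * (n - 1) / 2) * w ^ n / (n.factorial : ℂ)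
    with hf
  set f' : ℕ → ℂ → ℂ :=
    fun n w => (α : ℂ) ^ (n * (n - 1) / 2) * ((n : ℂ) * w ^ (n - 1)) / (n.factorial : ℂ)
    with hf'
  set u : ℕ → ℝ := fun n => (n : ℝ) * R ^ (n - 1) / n.factorial with hu'
  have hu : Summable u := by
    have hsum : Summable (fun n : ℕ => R ^ n / n.factorial) := Real.summable_pow_div_factorial R
    have h1 : (fun n : ℕ => u (n + 1)) = fun n : ℕ => R ^ n / n.factorial := by
      funext n
      have hne : ((n : ℝ) + 1) ≠ 0 := by positivity
      simp only [hu', Nat.factorial_succ, Nat.add_sub_cancel, Nat.cast_mul, Nat.cast_add,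
        Nat.cast_one]
      field_simp
    exact (summable_nat_add_iff 1).mp (h1 ▸ hsum)
  have hαpow : ∀ e : ℕ, ‖(α : ℂ)‖ ^ e ≤ 1 := by
    intro e
    apply pow_le_one₀ (norm_nonneg _)
    rw [Complex.norm_real, Real.norm_eq_abs, abs_of_pos hα0]
    exact hα1.le
  have hbound : ∀ n (w : ℂ), w ∈ Metric.ball (0 : ℂ) R → ‖f' n w‖ ≤ u n := by
    intro n w hw
    rw [mem_ball_zero_iff] at hw
    simp only [hf', hu', norm_div, norm_mul, norm_pow, Complex.norm_natCast]
    have hf1 : (0:ℝ) < (n.factorial : ℝ) := by exact_mod_cast n.factorial_pos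
    rw [div_le_div_iff₀ (by positivity) hf1]
    have hmm : ‖(α:ℂ)‖ ^ (n * (n-1)/2) * ((n : ℝ) * ‖w‖ ^ (n - 1)) ≤ 1 * ((n:ℝ) * R ^ (n-1)) := by
      apply mul_le_mul (hαpow _) _ (by positivity) (by norm_num)
      have h2 : ‖w‖ ^ (n - 1) ≤ R ^ (n - 1) := pow_le_pow_left₀ (norm_nonneg w) hw.le _
      gcongr
    calc ‖(α:ℂ)‖ ^ (n * (n-1)/2) * ((n : ℝ) * ‖w‖ ^ (n - 1)) * (n.factorial : ℝ)
        ≤ 1 * ((n:ℝ) * R ^ (n-1)) * (n.factorial : ℝ) := by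
          apply mul_le_mul_of_nonneg_right hmm hf1.le
      _ = (n:ℝ) * R ^ (n-1) * (n.factorial : ℝ) := by ring
  have hfd : ∀ n (w : ℂ), HasDerivAt (f n) (f' n w) w := by
    intro n w
    simpa [hf, hf', mul_div_assoc] using (((hasDerivAt_pow n w).const_mul
      ((α : ℂ) ^ (n * (n - 1) / 2))).div_const (n.factorial : ℂ))
  have hf0 : Summable fun n => f n 0 := by
    apply summable_of_ne_finset_zero (s := {0})
    intro n hn
    simp only [Finset.mem_singleton] at hn
    simp [hf, zero_pow hn]
  have key : HasDerivAt (fun w => ∑' n, f n w) (∑' n, f' n z) z :=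
    hasDerivAt_tsum_of_isPreconnected hu Metric.isOpen_ball
      ((convex_ball (0:ℂ) R).isPreconnected)
      (fun n y _ => hfd n y) hbound (by simpa [mem_ball_zero_iff] using hR0)
      hf0 hzR
  have hsum' : Summable (fun n => f' n z) :=
    Summable.of_norm_bounded hu (fun n => hbound n z hzR)
  have hshift : ∀ n : ℕ, f' (n + 1) z
      = (α : ℂ) ^ (n * (n - 1) / 2) * ((α : ℂ) * z) ^ n / (n.factorial : ℂ) := by
    intro n
    have hne : ((n : ℂ) + 1) ≠ 0 := Nat.cast_add_one_ne_zero n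
    have hfne : ((n.factorial : ℂ)) ≠ 0 := Nat.cast_ne_zero.mpr n.factorial_ne_zero
    have e1 : (α : ℂ) ^ ((n + 1) * ((n + 1) - 1) / 2)
        = (α : ℂ) ^ (n * (n - 1) / 2) * (α : ℂ) ^ n := by
      rw [exp_shift, pow_add]
    show (α : ℂ) ^ ((n + 1) * ((n + 1) - 1) / 2) * (((n + 1 : ℕ) : ℂ) * z ^ ((n + 1) - 1))
        / (((n + 1).factorial : ℂ)) = _
    rw [e1, mul_pow, Nat.add_sub_cancel, Nat.factorial_succ, Nat.cast_mul]
    push_cast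
    field_simp
  have htsum : (∑' n, f' n z) = Ec α ((α : ℂ) * z) := by
    calc (∑' n, f' n z) = f' 0 z + ∑' n, f' (n + 1) z := Summable.tsum_eq_zero_add hsum'
      _ = ∑' n : ℕ, (α : ℂ) ^ (n * (n - 1) / 2) * ((α : ℂ) * z) ^ n / (n.factorial : ℂ) := by
          rw [tsum_congr hshift]; simp [hf']
      _ = Ec α ((α : ℂ) * z) := rfl
  rw [htsum] at key
  exact key

lemma Ec_comp_hasDerivAt (α : ℝ) (hα0 : 0 < α) (hα1 : α < 1) (β x : ℂ) :
    HasDerivAt (fun t => Ec α (β * t)) (β * Ec α ((α : ℂ) * β * x)) x := by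
  have h := (Ec_hasDerivAt α hα0 hα1 (β * x)).comp x ((hasDerivAt_id x).const_mul β)
  rw [show (α : ℂ) * (β * x) = (α : ℂ) * β * x by ring] at h
  exact h.congr_deriv (by ring)

/-- If `Δ = p² − 4αq ≠ 0`, `s` is a square root of `Δ`, and
`β₁ = (−p+s)/(2α)`, `β₂ = (−p−s)/(2α)`, then
`y(x) = a₁ E_α(β₁x) + a₂ E_α(β₂x)` with `a₁ = (c₁β₂−c₂)/(β₂−β₁)`,
`a₂ = (c₁β₁−c₂)/(β₁−β₂)` solves `y''(x) + p y'(αx) + q y(α²x) = 0`,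
`y(0) = c₁`, `y'(0) = c₂`. -/
theorem second_order_distinct_roots (α : ℝ) (hα : 0 < α) (hα1 : α < 1)
    (p q c₁ c₂ s : ℂ)
    (hΔ : p ^ 2 - 4 * (α : ℂ) * q ≠ 0)
    (hs : s ^ 2 = p ^ 2 - 4 * (α : ℂ) * q) :
    let β₁ : ℂ := (-p + s) / (2 * α)
    let β₂ : ℂ := (-p - s) / (2 * α)
    let a₁ : ℂ := (c₁ * β₂ - c₂) / (β₂ - β₁)
    let a₂ : ℂ := (c₁ * β₁ - c₂) / (β₁ - β₂)
    let y : ℂ → ℂ := fun x => a₁ * Ec α (β₁ * x) + a₂ * Ec α (β₂ * x)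
    (∀ x : ℂ, deriv (deriv y) x + p * deriv y ((α : ℂ) * x)
        + q * y ((α : ℂ) ^ 2 * x) = 0) ∧
    y 0 = c₁ ∧ deriv y 0 = c₂ := by
  intro β₁ β₂ a₁ a₂ y
  have hαC : (α : ℂ) ≠ 0 := by
    simpa using (Complex.ofReal_ne_zero.mpr hα.ne')
  have hs0 : s ≠ 0 := by
    intro h; apply hΔ; rw [← hs, h]; ring
  have hβ21 : β₂ - β₁ ≠ 0 := by
    show (-p - s) / (2 * α) - (-p + s) / (2 * α) ≠ 0
    rw [div_sub_div_same, div_ne_zero_iff]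
    constructor
    · intro h; apply hs0; linear_combination -h / 2
    · simpa using hαC
  have hβ12 : β₁ - β₂ ≠ 0 := fun h => hβ21 (by linear_combination -h)
  have hr1 : (α : ℂ) * β₁ ^ 2 + p * β₁ + q = 0 := by
    show (α : ℂ) * ((-p + s) / (2 * α)) ^ 2 + p * ((-p + s) / (2 * α)) + q = 0
    field_simp
    linear_combination hs
  have hr2 : (α : ℂ) * β₂ ^ 2 + p * β₂ + q = 0 := by
    show (α : ℂ) * ((-p - s) / (2 * α)) ^ 2 + p * ((-p - s) / (2 * α)) + q = 0
    field_simp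
    linear_combination hs
  have hcomp := Ec_comp_hasDerivAt α hα hα1
  have hdy : ∀ x : ℂ, HasDerivAt y
      (a₁ * (β₁ * Ec α ((α : ℂ) * β₁ * x)) + a₂ * (β₂ * Ec α ((α : ℂ) * β₂ * x))) x :=
    fun x => ((hcomp β₁ x).const_mul a₁).add ((hcomp β₂ x).const_mul a₂)
  have hdy' : deriv y = fun x =>
      a₁ * (β₁ * Ec α ((α : ℂ) * β₁ * x)) + a₂ * (β₂ * Ec α ((α : ℂ) * β₂ * x)) :=
    funext fun x => (hdy x).deriv
  have hdd : ∀ x : ℂ, HasDerivAt (deriv y)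
      (a₁ * (β₁ * ((α : ℂ) * β₁ * Ec α ((α : ℂ) * ((α : ℂ) * β₁) * x)))
        + a₂ * (β₂ * ((α : ℂ) * β₂ * Ec α ((α : ℂ) * ((α : ℂ) * β₂) * x)))) x := by
    intro x
    rw [hdy']
    exact (((hcomp ((α : ℂ) * β₁) x).const_mul β₁).const_mul a₁).add
      (((hcomp ((α : ℂ) * β₂) x).const_mul β₂).const_mul a₂)
  refine ⟨?_, ?_, ?_⟩
  · intro x
    rw [(hdd x).deriv, hdy']
    show a₁ * (β₁ * ((α : ℂ) * β₁ * Ec α ((α : ℂ) * ((α : ℂ) * β₁) * x)))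
        + a₂ * (β₂ * ((α : ℂ) * β₂ * Ec α ((α : ℂ) * ((α : ℂ) * β₂) * x)))
        + p * (a₁ * (β₁ * Ec α ((α : ℂ) * β₁ * ((α : ℂ) * x)))
          + a₂ * (β₂ * Ec α ((α : ℂ) * β₂ * ((α : ℂ) * x))))
        + q * (a₁ * Ec α (β₁ * ((α : ℂ) ^ 2 * x)) + a₂ * Ec α (β₂ * ((α : ℂ) ^ 2 * x))) = 0
    rw [show (α : ℂ) * ((α : ℂ) * β₁) * x = β₁ * ((α : ℂ) ^ 2 * x) by ring,
      show (α : ℂ) * ((α : ℂ) * β₂) * x = β₂ * ((α : ℂ) ^ 2 * x) by ring,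
      show (α : ℂ) * β₁ * ((α : ℂ) * x) = β₁ * ((α : ℂ) ^ 2 * x) by ring,
      show (α : ℂ) * β₂ * ((α : ℂ) * x) = β₂ * ((α : ℂ) ^ 2 * x) by ring]
    linear_combination (a₁ * Ec α (β₁ * ((α : ℂ) ^ 2 * x))) * hr1
      + (a₂ * Ec α (β₂ * ((α : ℂ) ^ 2 * x))) * hr2
  · show a₁ * Ec α (β₁ * 0) + a₂ * Ec α (β₂ * 0) = c₁
    rw [mul_zero, mul_zero, Ec_zero, mul_one, mul_one]
    show (c₁ * β₂ - c₂) / (β₂ - β₁) + (c₁ * β₁ - c₂) / (β₁ - β₂) = c₁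
    field_simp
    ring
  · rw [hdy']
    show a₁ * (β₁ * Ec α ((α : ℂ) * β₁ * 0)) + a₂ * (β₂ * Ec α ((α : ℂ) * β₂ * 0)) = c₂
    rw [mul_zero, mul_zero, Ec_zero, mul_one, mul_one]
    show (c₁ * β₂ - c₂) / (β₂ - β₁) * β₁ + (c₁ * β₁ - c₂) / (β₁ - β₂) * β₂ = c₂
    field_simp
    ring
end

section
/- For β ≠ 0 and q constant, the function y(x) = y₀ E_α(βx) + q x E_α(αβ x) solves the non-homogeneous pantograph equation y'(x) = β y(αx) + q E_α(αβ x) with y(0) = y₀. -/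
lemma Ea_zero (α : ℝ) : Ea α 0 = 1 := by
  unfold Ea
  rw [tsum_eq_single 0 (by intro n hn; simp [zero_pow hn])]
  simp

lemma tri_succ (m : ℕ) : (m + 1) * ((m + 1) - 1) / 2 = m * (m - 1) / 2 + m := by
  rw [← Finset.sum_range_id, ← Finset.sum_range_id, Finset.sum_range_succ]

lemma Ea_hasDerivAt (α : ℝ) (hα0 : 0 ≤ α) (hα1 : α ≤ 1) (x : ℝ) :
    HasDerivAt (Ea α) (Ea α (α * x)) x := by
  set R : ℝ := |x| + 1 with hR
  have hR0 : 0 < R := by positivity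
  set g : ℕ → ℝ → ℝ := fun n y => α ^ (n * (n - 1) / 2) * y ^ n / (n.factorial : ℝ) with hg_def
  set g' : ℕ → ℝ → ℝ := fun n y =>
    α ^ (n * (n - 1) / 2) * ((n : ℝ) * y ^ (n - 1)) / (n.factorial : ℝ) with hg'_def
  set u : ℕ → ℝ := fun n => R ^ (n - 1) / ((n - 1).factorial : ℝ) with hu_def
  have hu : Summable u := by
    rw [← summable_nat_add_iff 1]
    simpa [hu_def] using Real.summable_pow_div_factorial R
  have hg : ∀ n y, HasDerivAt (g n) (g' n y) y := fun n y =>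
    ((hasDerivAt_pow n y).const_mul (α ^ (n * (n - 1) / 2))).div_const (n.factorial : ℝ)
  have hxball : x ∈ Metric.ball (0 : ℝ) R := by
    simp only [Metric.mem_ball, dist_zero_right, Real.norm_eq_abs, hR]
    linarith
  have hg' : ∀ n, ∀ y ∈ Metric.ball (0 : ℝ) R, ‖g' n y‖ ≤ u n := by
    intro n y hy
    have hyR : |y| ≤ R := by
      simp only [Metric.mem_ball, dist_zero_right, Real.norm_eq_abs] at hy
      exact hy.le
    match n with
    | 0 => simp [hg'_def, hu_def]
    | m + 1 =>
      have h1 : ‖g' (m + 1) y‖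
          = α ^ ((m + 1) * m / 2) * (((m : ℝ) + 1) * |y| ^ m) / ((m + 1).factorial : ℝ) := by
        simp [hg'_def, abs_of_nonneg, abs_mul, abs_div, abs_pow, abs_of_nonneg hα0,
          abs_of_nonneg (by positivity : (0:ℝ) ≤ (m : ℝ) + 1)]
      rw [h1]
      have h2 : α ^ ((m + 1) * m / 2) ≤ 1 := pow_le_one₀ hα0 hα1
      have h3 : |y| ^ m ≤ R ^ m := by gcongr
      have h4 : α ^ ((m + 1) * m / 2) * (((m : ℝ) + 1) * |y| ^ m) / ((m + 1).factorial : ℝ)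
          ≤ 1 * (((m : ℝ) + 1) * R ^ m) / ((m + 1).factorial : ℝ) := by
        gcongr
      refine h4.trans (le_of_eq ?_)
      simp only [hu_def, Nat.add_sub_cancel]
      rw [Nat.factorial_succ]
      have hm : (m.factorial : ℝ) ≠ 0 := Nat.cast_ne_zero.mpr m.factorial_ne_zero
      push_cast
      field_simp
  have hg0 : Summable fun n => g n 0 := by
    apply summable_of_ne_finset_zero (s := {0})
    intro n hn
    simp only [Finset.mem_singleton] at hn
    simp [hg_def, zero_pow hn]
  have key : HasDerivAt (fun z => ∑' n, g n z) (∑' n, g' n x) x :=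
    hasDerivAt_tsum_of_isPreconnected hu Metric.isOpen_ball (convex_ball _ _).isPreconnected
      (fun n y _ => hg n y) hg' (by simpa using hR0) hg0 hxball
  have hsum : Summable fun n => g' n x :=
    Summable.of_norm_bounded hu fun n => hg' n x hxball
  have hEq : ∑' n, g' n x = Ea α (α * x) := by
    rw [Summable.tsum_eq_zero_add hsum]
    have h0 : g' 0 x = 0 := by simp [hg'_def]
    rw [h0, zero_add]
    unfold Ea
    refine tsum_congr fun m => ?_
    simp only [hg'_def]
    rw [tri_succ, pow_add, Nat.add_sub_cancel, Nat.factorial_succ, mul_pow]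
    have hm : (m.factorial : ℝ) ≠ 0 := Nat.cast_ne_zero.mpr m.factorial_ne_zero
    push_cast
    field_simp
  rw [← hEq]
  exact key

/-- For `β ≠ 0`, `y(x) = y₀ E_α(βx) + q x E_α(αβx)` solves
`y'(x) = β y(αx) + q E_α(αβx)` with `y(0) = y₀`. -/
theorem nonhomogeneous_resonant_solution (α β q y₀ : ℝ) (hα : 0 < α) (hα1 : α < 1)
    (hβ : β ≠ 0) :
    let y : ℝ → ℝ := fun x => y₀ * Ea α (β * x) + q * x * Ea α (α * β * x)
    (∀ x : ℝ, HasDerivAt y (β * y (α * x) + q * Ea α (α * β * x)) x) ∧ y 0 = y₀ := by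
  intro y
  constructor
  · intro x
    have hb : HasDerivAt (fun t : ℝ => β * t) β x := by
      simpa using (hasDerivAt_id x).const_mul β
    have hab : HasDerivAt (fun t : ℝ => α * β * t) (α * β) x := by
      simpa using (hasDerivAt_id x).const_mul (α * β)
    have h1 : HasDerivAt (fun t => Ea α (β * t)) (Ea α (α * (β * x)) * β) x :=
      (Ea_hasDerivAt α hα.le hα1.le (β * x)).comp x hb
    have h2 : HasDerivAt (fun t => Ea α (α * β * t)) (Ea α (α * (α * β * x)) * (α * β)) x :=
      (Ea_hasDerivAt α hα.le hα1.le (α * β * x)).comp x hab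
    have hq : HasDerivAt (fun t : ℝ => q * t) q x := by
      simpa using (hasDerivAt_id x).const_mul q
    have h3 := (hq.mul h2)
    have h := (h1.const_mul y₀).add h3
    have e1 : β * (α * x) = α * (β * x) := by ring
    have e2 : α * β * (α * x) = α * (α * β * x) := by ring
    convert h using 1
    · rfl
    · rfl
    · rfl
    simp only [y, e1, e2]
    ring
  · simp [y, Ea_zero]
end

section
/- Setting y = −t and x = t in the addition formula yields the conservation identity 1 = Σ_{n=0}^∞ ((-1)^n t^n / n!) C_α^{(n)}(t) for all real t, where C_α^{(n)} denotes the n-th derivative of C_α. -/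
open scoped ENNReal NNReal


/-- Coefficients of the power series of `Ca α` at `0`. -/
noncomputable def caCoef (α : ℝ) : ℕ → ℝ := fun k =>
  if k % 2 = 0 then (-1 : ℝ) ^ (k / 2) * α ^ ((k / 2) * (2 * (k / 2) - 1)) / (k.factorial : ℝ)
  else 0

lemma caCoef_abs_le {α : ℝ} (hα : 0 < α) (hα1 : α ≤ 1) (k : ℕ) :
    |caCoef α k| ≤ 1 / (k.factorial : ℝ) := by
  unfold caCoef
  split_ifs with h
  · rw [abs_div, abs_mul, abs_pow, abs_pow, abs_neg, abs_one, one_pow, one_mul,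
      Nat.abs_cast, abs_of_pos hα]
    apply div_le_div_of_nonneg_right _ (by positivity)
    exact pow_le_one₀ hα.le hα1
  · rw [abs_zero]; positivity

/-- The power series of `Ca α`. -/
noncomputable def caSeries (α : ℝ) : FormalMultilinearSeries ℝ ℝ ℝ :=
  FormalMultilinearSeries.ofScalars ℝ (caCoef α)

lemma caSeries_radius {α : ℝ} (hα : 0 < α) (hα1 : α ≤ 1) : (caSeries α).radius = ⊤ := by
  apply FormalMultilinearSeries.radius_eq_top_of_summable_norm
  intro r
  have hsum : Summable (fun n : ℕ => (r : ℝ) ^ n / (n.factorial : ℝ)) :=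
    Real.summable_pow_div_factorial (r : ℝ)
  refine Summable.of_nonneg_of_le
    (fun n => mul_nonneg (norm_nonneg _) (pow_nonneg r.coe_nonneg n))
    (fun n => ?_) hsum
  rw [caSeries, FormalMultilinearSeries.ofScalars_norm, Real.norm_eq_abs]
  calc |caCoef α n| * (r : ℝ) ^ n ≤ 1 / (n.factorial : ℝ) * (r : ℝ) ^ n :=
        mul_le_mul_of_nonneg_right (caCoef_abs_le hα hα1 n) (by positivity)
    _ = (r : ℝ) ^ n / (n.factorial : ℝ) := by ring

lemma caCoef_summable {α : ℝ} (hα : 0 < α) (hα1 : α ≤ 1) (y : ℝ) :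
    Summable (fun n : ℕ => caCoef α n * y ^ n) := by
  apply Summable.of_norm
  have hsum : Summable (fun n : ℕ => |y| ^ n / (n.factorial : ℝ)) :=
    Real.summable_pow_div_factorial |y|
  refine Summable.of_nonneg_of_le (fun n => norm_nonneg _) (fun n => ?_) hsum
  rw [norm_mul, norm_pow, Real.norm_eq_abs, Real.norm_eq_abs]
  calc |caCoef α n| * |y| ^ n ≤ 1 / (n.factorial : ℝ) * |y| ^ n :=
        mul_le_mul_of_nonneg_right (caCoef_abs_le hα hα1 n) (by positivity)
    _ = |y| ^ n / (n.factorial : ℝ) := by ring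

lemma caCoef_hasSum {α : ℝ} (hα : 0 < α) (hα1 : α ≤ 1) (y : ℝ) :
    HasSum (fun n : ℕ => caCoef α n * y ^ n) (Ca α y) := by
  have hs := (caCoef_summable hα hα1 y).hasSum
  have hinj : Function.Injective (fun m : ℕ => 2 * m) := fun a b h => by
    simp only at h; omega
  have hzero : ∀ n ∉ Set.range (fun m : ℕ => 2 * m),
      caCoef α n * y ^ n = 0 := by
    intro n hn
    have : n % 2 = 1 := by
      rcases Nat.even_or_odd n with he | ho
      · obtain ⟨m, hm⟩ := he
        exact absurd ⟨m, by show 2 * m = n; omega⟩ hn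
      · exact Nat.odd_iff.mp ho
    simp [caCoef, this]
  have h2 := (hinj.hasSum_iff hzero).mpr hs
  have hCa : Ca α y = ∑' n : ℕ, caCoef α n * y ^ n := by
    rw [← hs.tsum_eq, ← h2.tsum_eq]
    apply tsum_congr
    intro m
    simp only [Function.comp_apply, caCoef]
    have h1 : (2 * m) % 2 = 0 := by omega
    have h2 : (2 * m) / 2 = m := by omega
    rw [if_pos h1, h2]
    ring
  rw [hCa]; exact hs

lemma ca_hasFPowerSeries {α : ℝ} (hα : 0 < α) (hα1 : α ≤ 1) :
    HasFPowerSeriesOnBall (Ca α) (caSeries α) 0 ⊤ := by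
  refine ⟨by rw [caSeries_radius hα hα1], ENNReal.zero_lt_top, ?_⟩
  intro y _
  have := caCoef_hasSum hα hα1 y
  rw [zero_add]
  convert this using 2 with n
  case e'_3 => rfl
  rw [caSeries, FormalMultilinearSeries.ofScalars_apply_eq, smul_eq_mul]

lemma Ca_zero_s19 (α : ℝ) : Ca α 0 = 1 := by
  unfold Ca
  rw [tsum_eq_single 0]
  · norm_num
  · intro n hn
    have : 2 * n ≠ 0 := by omega
    rw [zero_pow this]
    ring

/-- The conservation identity
`1 = Σ_{n} ((-1)ⁿ tⁿ/n!) C_α⁽ⁿ⁾(t)` for all real `t`. -/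
theorem Ca_conservation (α : ℝ) (hα : 0 < α) (hα1 : α ≤ 1) (t : ℝ) :
    (1 : ℝ) = ∑' n : ℕ,
      ((-1 : ℝ) ^ n * t ^ n / (n.factorial : ℝ)) * iteratedDeriv n (Ca α) t := by
  have h := ca_hasFPowerSeries hα hα1
  have ht : (‖t‖₊ : ℝ≥0∞) < ⊤ := ENNReal.coe_lt_top
  have h2 := h.changeOrigin ht
  rw [zero_add] at h2
  rw [ENNReal.top_sub_coe] at h2
  have h3 := h2.hasSum_iteratedFDeriv (y := -t) (by simp)
  rw [add_neg_cancel, Ca_zero_s19] at h3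
  have key : ∀ n : ℕ, (n.factorial : ℝ)⁻¹ • iteratedFDeriv ℝ n (Ca α) t (fun _ => -t)
      = ((-1 : ℝ) ^ n * t ^ n / (n.factorial : ℝ)) * iteratedDeriv n (Ca α) t := by
    intro n
    have hm : iteratedFDeriv ℝ n (Ca α) t (fun _ => -t)
        = (-t) ^ n * iteratedFDeriv ℝ n (Ca α) t (fun _ => (1 : ℝ)) := by
      have := (iteratedFDeriv ℝ n (Ca α) t).map_smul_univ (fun _ => -t) (fun _ => (1 : ℝ))
      simpa [Finset.prod_const, smul_eq_mul] using this
    rw [hm, iteratedDeriv_eq_iteratedFDeriv, smul_eq_mul, neg_pow]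
    ring
  simp_rw [key] at h3
  exact h3.tsum_eq.symm
end
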